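/- arXiv:math/0102107 — 10 statements merged into one kernel-verified Lean document; each statement's English description precedes it below -/
import Mathlib

section
/- Let (X₁,d₁), (X₂,d₂) be metric spaces, X = X₁ × X₂ with the ℓ² product metric, V a real normed vector space, and φ = (φ₁,φ₂) : V → X an isometric map. Define αᵢ(a,v) := dᵢ(φᵢ(a), φᵢ(a+v)). Then αᵢ(a,v) = αᵢ(a+v, v) for all a, v ∈ V and i = 1,2. -/
/-- With `φ = (φ₁, φ₂) : V → X₁ × X₂` isometric for the ℓ² product metric and
`αᵢ(a,v) = dᵢ(φᵢ a, φᵢ (a+v))`, one has `αᵢ(a,v) = αᵢ(a+v,v)` for `i = 1,2`. -/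
theorem stmt1 {X₁ X₂ : Type*} [MetricSpace X₁] [MetricSpace X₂]
    {V : Type*} [NormedAddCommGroup V] [NormedSpace ℝ V]
    (φ₁ : V → X₁) (φ₂ : V → X₂)
    (hiso : ∀ a b : V,
      Real.sqrt (dist (φ₁ a) (φ₁ b) ^ 2 + dist (φ₂ a) (φ₂ b) ^ 2) = ‖b - a‖) :
    ∀ a v : V,
      dist (φ₁ a) (φ₁ (a + v)) = dist (φ₁ (a + v)) (φ₁ (a + v + v)) ∧
      dist (φ₂ a) (φ₂ (a + v)) = dist (φ₂ (a + v)) (φ₂ (a + v + v)) := by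
  intro a v
  have hsq : ∀ b c : V, dist (φ₁ b) (φ₁ c) ^ 2 + dist (φ₂ b) (φ₂ c) ^ 2 = ‖c - b‖ ^ 2 := by
    intro b c
    have hn : (0:ℝ) ≤ dist (φ₁ b) (φ₁ c) ^ 2 + dist (φ₂ b) (φ₂ c) ^ 2 := by positivity
    rw [← hiso b c, Real.sq_sqrt hn]
  set x₁ := dist (φ₁ a) (φ₁ (a+v)) with hx₁
  set x₂ := dist (φ₂ a) (φ₂ (a+v)) with hx₂
  set y₁ := dist (φ₁ (a+v)) (φ₁ (a+v+v)) with hy₁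
  set y₂ := dist (φ₂ (a+v)) (φ₂ (a+v+v)) with hy₂
  set z₁ := dist (φ₁ a) (φ₁ (a+v+v)) with hz₁
  set z₂ := dist (φ₂ a) (φ₂ (a+v+v)) with hz₂
  have h1 := hsq a (a+v)
  have h2 := hsq (a+v) (a+v+v)
  have h3 := hsq a (a+v+v)
  have e1 : a + v - a = v := by abel
  have e2 : a + v + v - (a + v) = v := by abel
  have e3 : a + v + v - a = (2:ℝ) • v := by module
  rw [e1] at h1
  rw [e2] at h2
  rw [e3, norm_smul] at h3
  simp only [Real.norm_ofNat] at h3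
  have t1 : z₁ ≤ x₁ + y₁ := dist_triangle _ _ _
  have t2 : z₂ ≤ x₂ + y₂ := dist_triangle _ _ _
  have n1 : (0:ℝ) ≤ z₁ := dist_nonneg
  have n2 : (0:ℝ) ≤ z₂ := dist_nonneg
  have key : (x₁ - y₁)^2 + (x₂ - y₂)^2 = 0 := by
    nlinarith [sq_nonneg (x₁ - y₁), sq_nonneg (x₂ - y₂), sq_nonneg (x₁ + y₁ - z₁),
      sq_nonneg (x₂ + y₂ - z₂), mul_nonneg n1 n2]
  have s1 := sq_nonneg (x₁ - y₁)
  have s2 := sq_nonneg (x₂ - y₂)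
  have k1 : (x₁ - y₁)^2 = 0 := by linarith
  have k2 : (x₂ - y₂)^2 = 0 := by linarith
  have e1' := pow_eq_zero_iff (n := 2) (by norm_num) |>.mp k1
  have e2' := pow_eq_zero_iff (n := 2) (by norm_num) |>.mp k2
  constructor <;> linarith
end

section
/- Let (X₁,d₁), (X₂,d₂) be metric spaces, X = X₁ × X₂ with the ℓ² product metric, V a real normed vector space, and φ = (φ₁,φ₂) : V → X an isometric map. Define αᵢ(a,v) := dᵢ(φᵢ(a), φᵢ(a+v)). Then αᵢ(a, t·v) = |t|·αᵢ(a,v) for all a ∈ V, v ∈ V, t ∈ ℝ, and i = 1,2. -/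
set_option maxHeartbeats 1000000

/-- Equality case in Minkowski's inequality in `ℝ²` for nonnegative vectors. -/
lemma minkEq {x₁ x₂ y₁ y₂ z₁ z₂ : ℝ} (hx₁ : 0 ≤ x₁) (hx₂ : 0 ≤ x₂)
    (hy₁ : 0 ≤ y₁) (hy₂ : 0 ≤ y₂) (hz₁ : 0 ≤ z₁) (hz₂ : 0 ≤ z₂)
    (h1 : z₁ ≤ x₁ + y₁) (h2 : z₂ ≤ x₂ + y₂)
    (h : Real.sqrt (z₁ ^ 2 + z₂ ^ 2) =
      Real.sqrt (x₁ ^ 2 + x₂ ^ 2) + Real.sqrt (y₁ ^ 2 + y₂ ^ 2)) :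
    z₁ = x₁ + y₁ ∧ z₂ = x₂ + y₂ ∧ x₁ * y₂ = x₂ * y₁ := by
  set X := Real.sqrt (x₁ ^ 2 + x₂ ^ 2) with hX
  set Y := Real.sqrt (y₁ ^ 2 + y₂ ^ 2) with hY
  have hXsq : X ^ 2 = x₁ ^ 2 + x₂ ^ 2 := Real.sq_sqrt (by positivity)
  have hYsq : Y ^ 2 = y₁ ^ 2 + y₂ ^ 2 := Real.sq_sqrt (by positivity)
  have hX0 : 0 ≤ X := Real.sqrt_nonneg _
  have hY0 : 0 ≤ Y := Real.sqrt_nonneg _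
  have hZ : z₁ ^ 2 + z₂ ^ 2 = (X + Y) ^ 2 := by
    rw [← h, Real.sq_sqrt (by positivity)]
  -- Cauchy–Schwarz : x·y ≤ X*Y
  have hCS : x₁ * y₁ + x₂ * y₂ ≤ X * Y := by
    have h1' : (x₁ * y₁ + x₂ * y₂) ^ 2 ≤ (X * Y) ^ 2 := by
      rw [mul_pow, hXsq, hYsq]; nlinarith [sq_nonneg (x₁ * y₂ - x₂ * y₁)]
    nlinarith [mul_nonneg hX0 hY0, add_nonneg (mul_nonneg hx₁ hy₁) (mul_nonneg hx₂ hy₂)]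
  have e1 : z₁ ^ 2 ≤ (x₁ + y₁) ^ 2 := by nlinarith
  have e2 : z₂ ^ 2 ≤ (x₂ + y₂) ^ 2 := by nlinarith
  have hXY : X * Y ≤ x₁ * y₁ + x₂ * y₂ := by nlinarith
  have hdot : x₁ * y₁ + x₂ * y₂ = X * Y := le_antisymm hCS hXY
  have hsum : z₁ ^ 2 + z₂ ^ 2 = (x₁ + y₁) ^ 2 + (x₂ + y₂) ^ 2 := by
    rw [hZ]; linear_combination hXsq + hYsq - 2 * hdot
  have hd2 : (x₁ * y₁ + x₂ * y₂) ^ 2 = (x₁ ^ 2 + x₂ ^ 2) * (y₁ ^ 2 + y₂ ^ 2) := by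
    rw [hdot, mul_pow, hXsq, hYsq]
  have hcr : (x₁ * y₂ - x₂ * y₁) ^ 2 = 0 := by linear_combination -hd2
  have hcross : x₁ * y₂ = x₂ * y₁ := by
    have := pow_eq_zero_iff (n := 2) (by norm_num) |>.mp hcr
    linarith [this]
  refine ⟨by nlinarith, by nlinarith, hcross⟩

/-- Parallel nonnegative vectors with proportional norms are proportional. -/
lemma parEq {x₁ x₂ z₁ z₂ t : ℝ} (hx₁ : 0 ≤ x₁) (hx₂ : 0 ≤ x₂)
    (hz₁ : 0 ≤ z₁) (hz₂ : 0 ≤ z₂) (ht : 0 ≤ t)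
    (hcross : x₁ * z₂ = x₂ * z₁)
    (hnorm : x₁ ^ 2 + x₂ ^ 2 = t ^ 2 * (z₁ ^ 2 + z₂ ^ 2))
    (hpos : 0 < z₁ ^ 2 + z₂ ^ 2) :
    x₁ = t * z₁ ∧ x₂ = t * z₂ := by
  have h1 : (x₁ * z₁ + x₂ * z₂) ^ 2 = (t * (z₁ ^ 2 + z₂ ^ 2)) ^ 2 := by
    linear_combination (z₁ ^ 2 + z₂ ^ 2) * hnorm - (x₁ * z₂ - x₂ * z₁) * hcross
  have h2 : x₁ * z₁ + x₂ * z₂ = t * (z₁ ^ 2 + z₂ ^ 2) := by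
    nlinarith [add_nonneg (mul_nonneg hx₁ hz₁) (mul_nonneg hx₂ hz₂),
      mul_nonneg ht hpos.le]
  constructor <;> nlinarith [sq_nonneg (x₁ - t * z₁), sq_nonneg (x₂ - t * z₂)]

/-- With `φ = (φ₁, φ₂) : V → X₁ × X₂` isometric for the ℓ² product metric and
`αᵢ(a,v) = dᵢ(φᵢ a, φᵢ (a+v))`, one has `αᵢ(a, t • v) = |t| ⬝ αᵢ(a,v)` for all `t ∈ ℝ`. -/
theorem stmt2 {X₁ X₂ : Type*} [MetricSpace X₁] [MetricSpace X₂]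
    {V : Type*} [NormedAddCommGroup V] [NormedSpace ℝ V]
    (φ₁ : V → X₁) (φ₂ : V → X₂)
    (hiso : ∀ a b : V,
      Real.sqrt (dist (φ₁ a) (φ₁ b) ^ 2 + dist (φ₂ a) (φ₂ b) ^ 2) = ‖b - a‖) :
    ∀ (a v : V) (t : ℝ),
      dist (φ₁ a) (φ₁ (a + t • v)) = |t| * dist (φ₁ a) (φ₁ (a + v)) ∧
      dist (φ₂ a) (φ₂ (a + t • v)) = |t| * dist (φ₂ a) (φ₂ (a + v)) := by
  intro a v t
  by_cases hv : v = 0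
  · subst hv; simp
  · have hw : (0:ℝ) < ‖v‖ := norm_pos_iff.mpr hv
    have key : ∀ s r : ℝ,
        Real.sqrt (dist (φ₁ (a + s • v)) (φ₁ (a + r • v)) ^ 2 +
          dist (φ₂ (a + s • v)) (φ₂ (a + r • v)) ^ 2) = |r - s| * ‖v‖ := by
      intro s r
      rw [hiso, show (a + r • v) - (a + s • v) = (r - s) • v by module,
        norm_smul, Real.norm_eq_abs]
    have keysq : ∀ s r : ℝ,
        dist (φ₁ (a + s • v)) (φ₁ (a + r • v)) ^ 2 +
          dist (φ₂ (a + s • v)) (φ₂ (a + r • v)) ^ 2 = (r - s) ^ 2 * ‖v‖ ^ 2 := by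
      intro s r
      have h : (Real.sqrt (dist (φ₁ (a + s • v)) (φ₁ (a + r • v)) ^ 2 +
          dist (φ₂ (a + s • v)) (φ₂ (a + r • v)) ^ 2)) ^ 2 = (|r - s| * ‖v‖) ^ 2 := by
        rw [key]
      rw [Real.sq_sqrt (by positivity)] at h
      rw [h, mul_pow, sq_abs]
    have step : ∀ s u r : ℝ, s ≤ u → u ≤ r →
        (dist (φ₁ (a+s•v)) (φ₁ (a+r•v)) =
            dist (φ₁ (a+s•v)) (φ₁ (a+u•v)) + dist (φ₁ (a+u•v)) (φ₁ (a+r•v)) ∧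
         dist (φ₂ (a+s•v)) (φ₂ (a+r•v)) =
            dist (φ₂ (a+s•v)) (φ₂ (a+u•v)) + dist (φ₂ (a+u•v)) (φ₂ (a+r•v)) ∧
         dist (φ₁ (a+s•v)) (φ₁ (a+u•v)) * dist (φ₂ (a+u•v)) (φ₂ (a+r•v)) =
           dist (φ₂ (a+s•v)) (φ₂ (a+u•v)) * dist (φ₁ (a+u•v)) (φ₁ (a+r•v))) := by
      intro s u r hsu hur
      apply minkEq dist_nonneg dist_nonneg dist_nonneg dist_nonneg dist_nonneg dist_nonneg
        (dist_triangle _ _ _) (dist_triangle _ _ _)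
      rw [key, key, key,
        abs_of_nonneg (by linarith : (0:ℝ) ≤ r - s),
        abs_of_nonneg (sub_nonneg.mpr hsu), abs_of_nonneg (sub_nonneg.mpr hur)]
      ring
    have k01 : dist (φ₁ a) (φ₁ (a + v)) ^ 2 + dist (φ₂ a) (φ₂ (a + v)) ^ 2 = ‖v‖ ^ 2 := by
      have h := keysq 0 1
      simp only [zero_smul, add_zero, one_smul] at h
      norm_num at h
      exact h
    have k0t : dist (φ₁ a) (φ₁ (a + t • v)) ^ 2 + dist (φ₂ a) (φ₂ (a + t • v)) ^ 2
        = t ^ 2 * ‖v‖ ^ 2 := by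
      have h := keysq 0 t
      simp only [zero_smul, add_zero, sub_zero] at h
      exact h
    have hpos : (0:ℝ) < dist (φ₁ a) (φ₁ (a + v)) ^ 2 + dist (φ₂ a) (φ₂ (a + v)) ^ 2 := by
      rw [k01]; positivity
    rcases le_total 0 t with h0 | h0
    · rcases le_total t 1 with ht1 | ht1
      · -- 0 ≤ t ≤ 1, use points 0 ≤ t ≤ 1
        obtain ⟨e1, e2, ecr⟩ := step 0 t 1 h0 ht1
        simp only [zero_smul, add_zero, one_smul] at e1 e2 ecr
        have hcross : dist (φ₁ a) (φ₁ (a + t • v)) * dist (φ₂ a) (φ₂ (a + v)) =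
            dist (φ₂ a) (φ₂ (a + t • v)) * dist (φ₁ a) (φ₁ (a + v)) := by
          linear_combination dist (φ₁ a) (φ₁ (a + t • v)) * e2 -
            dist (φ₂ a) (φ₂ (a + t • v)) * e1 + ecr
        have hnorm : dist (φ₁ a) (φ₁ (a + t • v)) ^ 2 + dist (φ₂ a) (φ₂ (a + t • v)) ^ 2
            = t ^ 2 * (dist (φ₁ a) (φ₁ (a + v)) ^ 2 + dist (φ₂ a) (φ₂ (a + v)) ^ 2) := by
          rw [k01, k0t]
        obtain ⟨hA, hB⟩ := parEq dist_nonneg dist_nonneg dist_nonneg dist_nonneg h0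
          hcross hnorm hpos
        rw [abs_of_nonneg h0]
        exact ⟨hA, hB⟩
      · -- 1 ≤ t, use points 0 ≤ 1 ≤ t
        obtain ⟨e1, e2, ecr⟩ := step 0 1 t (by norm_num) ht1
        simp only [zero_smul, add_zero, one_smul] at e1 e2 ecr
        have hcross : dist (φ₁ a) (φ₁ (a + t • v)) * dist (φ₂ a) (φ₂ (a + v)) =
            dist (φ₂ a) (φ₂ (a + t • v)) * dist (φ₁ a) (φ₁ (a + v)) := by
          linear_combination dist (φ₂ a) (φ₂ (a + v)) * e1 -
            dist (φ₁ a) (φ₁ (a + v)) * e2 - ecr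
        have hnorm : dist (φ₁ a) (φ₁ (a + t • v)) ^ 2 + dist (φ₂ a) (φ₂ (a + t • v)) ^ 2
            = t ^ 2 * (dist (φ₁ a) (φ₁ (a + v)) ^ 2 + dist (φ₂ a) (φ₂ (a + v)) ^ 2) := by
          rw [k01, k0t]
        obtain ⟨hA, hB⟩ := parEq dist_nonneg dist_nonneg dist_nonneg dist_nonneg h0
          hcross hnorm hpos
        rw [abs_of_nonneg h0]
        exact ⟨hA, hB⟩
    · -- t ≤ 0, use points t ≤ 0 ≤ 1
      obtain ⟨e1, e2, ecr⟩ := step t 0 1 h0 (by norm_num)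
      simp only [zero_smul, add_zero, one_smul] at e1 e2 ecr
      have kt0 : dist (φ₁ (a + t • v)) (φ₁ a) ^ 2 + dist (φ₂ (a + t • v)) (φ₂ a) ^ 2
          = (-t) ^ 2 * ‖v‖ ^ 2 := by
        have h := keysq t 0
        simp only [zero_smul, add_zero, zero_sub] at h
        exact h
      have hnorm : dist (φ₁ (a + t • v)) (φ₁ a) ^ 2 + dist (φ₂ (a + t • v)) (φ₂ a) ^ 2
          = (-t) ^ 2 * (dist (φ₁ a) (φ₁ (a + v)) ^ 2 + dist (φ₂ a) (φ₂ (a + v)) ^ 2) := by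
        rw [k01, kt0]
      obtain ⟨hA, hB⟩ := parEq dist_nonneg dist_nonneg dist_nonneg dist_nonneg
        (by linarith : (0:ℝ) ≤ -t) ecr hnorm hpos
      rw [abs_of_nonpos h0, dist_comm (φ₁ a) (φ₁ (a + t • v)),
        dist_comm (φ₂ a) (φ₂ (a + t • v))]
      exact ⟨hA, hB⟩
end

section
/- Let (X₁,d₁), (X₂,d₂) be metric spaces, X = X₁ × X₂ with the ℓ² product metric, V a real normed vector space, and φ = (φ₁,φ₂) : V → X an isometric map. Define αᵢ(a,v) := dᵢ(φᵢ(a), φᵢ(a+v)). Then αᵢ(a,v) = αᵢ(b,v) for all a, b ∈ V and v ∈ V, i.e. αᵢ is independent of the basepoint. -/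
lemma key_scalar' (p q u₁ u₂ w₁ w₂ s₁ s₂ : ℝ)
    (hp : 0 ≤ p) (hq : 0 ≤ q) (hs₁ : 0 ≤ s₁) (hs₂ : 0 ≤ s₂)
    (hu₁ : 0 ≤ u₁) (hu₂ : 0 ≤ u₂) (hw₁ : 0 ≤ w₁) (hw₂ : 0 ≤ w₂)
    (hu : u₁^2 + u₂^2 = p^2) (hw : w₁^2 + w₂^2 = q^2) (hs : s₁^2 + s₂^2 = (p+q)^2)
    (t₁ : s₁ ≤ u₁ + w₁) (t₂ : s₂ ≤ u₂ + w₂) :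
    s₁ = u₁ + w₁ ∧ s₂ = u₂ + w₂ ∧ q*u₁ = p*w₁ ∧ q*u₂ = p*w₂ := by
  have sq1 : s₁^2 ≤ (u₁+w₁)^2 := by nlinarith [mul_le_mul_of_nonneg_left t₁ hs₁]
  have sq2 : s₂^2 ≤ (u₂+w₂)^2 := by nlinarith [mul_le_mul_of_nonneg_left t₂ hs₂]
  have hle : p*q ≤ u₁*w₁ + u₂*w₂ := by nlinarith [sq1, sq2]
  have hge : u₁*w₁ + u₂*w₂ ≤ p*q := by
    nlinarith [sq_nonneg (u₁*w₂ - u₂*w₁), mul_nonneg hp hq,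
      mul_nonneg (mul_nonneg hu₁ hw₁) (mul_nonneg hu₂ hw₂)]
  have e : u₁*w₁ + u₂*w₂ = p*q := le_antisymm hge hle
  have h0 : (q*u₁ - p*w₁)^2 + (q*u₂ - p*w₂)^2 = 0 := by
    linear_combination q^2*hu + p^2*hw - 2*p*q*e
  have z1 : (q*u₁ - p*w₁)^2 = 0 := by
    have := sq_nonneg (q*u₁ - p*w₁); have := sq_nonneg (q*u₂ - p*w₂); linarith
  have z2 : (q*u₂ - p*w₂)^2 = 0 := by
    have := sq_nonneg (q*u₁ - p*w₁); have := sq_nonneg (q*u₂ - p*w₂); linarith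
  have e1 : q*u₁ = p*w₁ := by have := sq_eq_zero_iff.mp z1; linarith
  have e2 : q*u₂ = p*w₂ := by have := sq_eq_zero_iff.mp z2; linarith
  have hsum : s₁^2 + s₂^2 = (u₁+w₁)^2 + (u₂+w₂)^2 := by
    linear_combination hs - hu - hw - 2*e
  have g1 : s₁^2 = (u₁+w₁)^2 := by linarith
  have g2 : s₂^2 = (u₂+w₂)^2 := by linarith
  have f1 : s₁ = u₁ + w₁ := by
    have hm : (u₁ + w₁ - s₁) * (u₁ + w₁ + s₁) = 0 := by linear_combination -g1
    rcases mul_eq_zero.mp hm with h | h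
    · linarith
    · linarith
  have f2 : s₂ = u₂ + w₂ := by
    have hm : (u₂ + w₂ - s₂) * (u₂ + w₂ + s₂) = 0 := by linear_combination -g2
    rcases mul_eq_zero.mp hm with h | h
    · linarith
    · linarith
  exact ⟨f1, f2, e1, e2⟩

lemma scale_aux {X₁ X₂ : Type*} [MetricSpace X₁] [MetricSpace X₂]
    {V : Type*} [NormedAddCommGroup V] [NormedSpace ℝ V]
    (φ₁ : V → X₁) (φ₂ : V → X₂)
    (hd : ∀ a b : V, dist (φ₁ a) (φ₁ b) ^ 2 + dist (φ₂ a) (φ₂ b) ^ 2 = ‖b - a‖ ^ 2)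
    (a v : V) (hv : v ≠ 0) : ∀ n : ℕ,
      dist (φ₁ a) (φ₁ (a + n • v)) = n * dist (φ₁ a) (φ₁ (a + v)) ∧
      dist (φ₂ a) (φ₂ (a + n • v)) = n * dist (φ₂ a) (φ₂ (a + v)) := by
  have hvn : (0:ℝ) < ‖v‖ := norm_pos_iff.mpr hv
  have hnsmul : ∀ n : ℕ, ‖(n • v : V)‖ = (n : ℝ) * ‖v‖ := by
    intro n
    rw [← Nat.cast_smul_eq_nsmul ℝ, norm_smul]
    simp
  intro n
  induction n with
  | zero => simp
  | succ n ih =>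
    rcases Nat.eq_zero_or_pos n with rfl | hn
    · simp
    obtain ⟨ih1, ih2⟩ := ih
    have hu := hd a (a + n • v)
    have hw := hd (a + n • v) (a + (n+1) • v)
    have hs := hd a (a + (n+1) • v)
    rw [add_sub_cancel_left, hnsmul] at hu
    rw [add_sub_cancel_left, hnsmul] at hs
    have hwv : (a + (n+1) • v) - (a + n • v) = v := by
      rw [succ_nsmul]; abel
    rw [hwv] at hw
    have hnormv : ‖v‖^2 = dist (φ₁ a) (φ₁ (a+v))^2 + dist (φ₂ a) (φ₂ (a+v))^2 := by
      have := hd a (a + v); rw [add_sub_cancel_left] at this; linarith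
    have key := key_scalar' ((n:ℝ) * ‖v‖) ‖v‖
      (dist (φ₁ a) (φ₁ (a + n • v))) (dist (φ₂ a) (φ₂ (a + n • v)))
      (dist (φ₁ (a + n • v)) (φ₁ (a + (n+1) • v))) (dist (φ₂ (a + n • v)) (φ₂ (a + (n+1) • v)))
      (dist (φ₁ a) (φ₁ (a + (n+1) • v))) (dist (φ₂ a) (φ₂ (a + (n+1) • v)))
      (by positivity) (norm_nonneg v) dist_nonneg dist_nonneg dist_nonneg dist_nonneg
      dist_nonneg dist_nonneg hu hw
      (by rw [hs]; push_cast; ring)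
      (dist_triangle _ _ _) (dist_triangle _ _ _)
    obtain ⟨k1, k2, k3, k4⟩ := key
    have hnv : (0:ℝ) < (n:ℝ) * ‖v‖ := by positivity
    have w1 : dist (φ₁ (a + n • v)) (φ₁ (a + (n+1) • v)) = dist (φ₁ a) (φ₁ (a+v)) := by
      rw [ih1] at k3
      have : (n:ℝ) * ‖v‖ * dist (φ₁ a) (φ₁ (a+v)) =
          (n:ℝ) * ‖v‖ * dist (φ₁ (a + n • v)) (φ₁ (a + (n+1) • v)) := by linarith [k3]
      exact (mul_left_cancel₀ (ne_of_gt hnv) this).symm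
    have w2 : dist (φ₂ (a + n • v)) (φ₂ (a + (n+1) • v)) = dist (φ₂ a) (φ₂ (a+v)) := by
      rw [ih2] at k4
      have : (n:ℝ) * ‖v‖ * dist (φ₂ a) (φ₂ (a+v)) =
          (n:ℝ) * ‖v‖ * dist (φ₂ (a + n • v)) (φ₂ (a + (n+1) • v)) := by linarith [k4]
      exact (mul_left_cancel₀ (ne_of_gt hnv) this).symm
    constructor
    · rw [k1, ih1, w1]; push_cast; ring
    · rw [k2, ih2, w2]; push_cast; ring

lemma arch_zero (x K : ℝ) (h : ∀ n : ℕ, (n : ℝ) * |x| ≤ K) : x = 0 := by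
  by_contra hx
  have hpos : 0 < |x| := abs_pos.mpr hx
  obtain ⟨n, hn⟩ := exists_nat_gt (K / |x|)
  have := h n
  rw [div_lt_iff₀ hpos] at hn
  linarith

/-- With `φ = (φ₁, φ₂) : V → X₁ × X₂` isometric for the ℓ² product metric and
`αᵢ(a,v) = dᵢ(φᵢ a, φᵢ (a+v))`, the quantity `αᵢ(a,v)` is independent of the basepoint `a`. -/
theorem stmt3 {X₁ X₂ : Type*} [MetricSpace X₁] [MetricSpace X₂]
    {V : Type*} [NormedAddCommGroup V] [NormedSpace ℝ V]
    (φ₁ : V → X₁) (φ₂ : V → X₂)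
    (hiso : ∀ a b : V,
      Real.sqrt (dist (φ₁ a) (φ₁ b) ^ 2 + dist (φ₂ a) (φ₂ b) ^ 2) = ‖b - a‖) :
    ∀ a b v : V,
      dist (φ₁ a) (φ₁ (a + v)) = dist (φ₁ b) (φ₁ (b + v)) ∧
      dist (φ₂ a) (φ₂ (a + v)) = dist (φ₂ b) (φ₂ (b + v)) := by
  have hd : ∀ a b : V, dist (φ₁ a) (φ₁ b) ^ 2 + dist (φ₂ a) (φ₂ b) ^ 2 = ‖b - a‖ ^ 2 := by
    intro a b
    have h := hiso a b
    have := congrArg (· ^ 2) h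
    simpa [Real.sq_sqrt (by positivity : (0:ℝ) ≤ dist (φ₁ a) (φ₁ b) ^ 2 + dist (φ₂ a) (φ₂ b) ^ 2)]
      using this
  have hlip₁ : ∀ x y : V, dist (φ₁ x) (φ₁ y) ≤ ‖y - x‖ := by
    intro x y
    nlinarith [hd x y, dist_nonneg (x := φ₁ x) (y := φ₁ y),
      dist_nonneg (x := φ₂ x) (y := φ₂ y), norm_nonneg (y - x)]
  have hlip₂ : ∀ x y : V, dist (φ₂ x) (φ₂ y) ≤ ‖y - x‖ := by
    intro x y
    nlinarith [hd x y, dist_nonneg (x := φ₁ x) (y := φ₁ y),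
      dist_nonneg (x := φ₂ x) (y := φ₂ y), norm_nonneg (y - x)]
  intro a b v
  rcases eq_or_ne v 0 with rfl | hv
  · simp
  -- component-wise argument
  have main : ∀ (ψ₁ : V → X₁),
      (∀ a' v' : V, v' ≠ 0 → ∀ n : ℕ,
        dist (ψ₁ a') (ψ₁ (a' + n • v')) = n * dist (ψ₁ a') (ψ₁ (a' + v'))) →
      (∀ x y : V, dist (ψ₁ x) (ψ₁ y) ≤ ‖y - x‖) →
      dist (ψ₁ a) (ψ₁ (a + v)) = dist (ψ₁ b) (ψ₁ (b + v)) := by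
    intro ψ hscale hlip
    apply sub_eq_zero.mp
    apply arch_zero _ (2 * ‖b - a‖)
    intro n
    have h1 : dist (ψ a) (ψ (a + n • v)) ≤
        dist (ψ a) (ψ b) + dist (ψ b) (ψ (b + n • v)) + dist (ψ (b + n • v)) (ψ (a + n • v)) := by
      calc dist (ψ a) (ψ (a + n • v)) ≤ dist (ψ a) (ψ b) + dist (ψ b) (ψ (a + n • v)) :=
            dist_triangle _ _ _
        _ ≤ dist (ψ a) (ψ b) + (dist (ψ b) (ψ (b + n • v)) + dist (ψ (b + n • v)) (ψ (a + n • v))) := by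
            linarith [dist_triangle (ψ b) (ψ (b + n • v)) (ψ (a + n • v))]
        _ = _ := by ring
    have h2 : dist (ψ b) (ψ (b + n • v)) ≤
        dist (ψ b) (ψ a) + dist (ψ a) (ψ (a + n • v)) + dist (ψ (a + n • v)) (ψ (b + n • v)) := by
      calc dist (ψ b) (ψ (b + n • v)) ≤ dist (ψ b) (ψ a) + dist (ψ a) (ψ (b + n • v)) :=
            dist_triangle _ _ _
        _ ≤ dist (ψ b) (ψ a) + (dist (ψ a) (ψ (a + n • v)) + dist (ψ (a + n • v)) (ψ (b + n • v))) := by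
            linarith [dist_triangle (ψ a) (ψ (a + n • v)) (ψ (b + n • v))]
        _ = _ := by ring
    have hab : dist (ψ a) (ψ b) ≤ ‖b - a‖ := hlip a b
    have hba : dist (ψ b) (ψ a) ≤ ‖b - a‖ := by rw [dist_comm]; exact hab
    have hab' : dist (ψ (b + n • v)) (ψ (a + n • v)) ≤ ‖b - a‖ := by
      have h := hlip (b + n • v) (a + n • v)
      have he : ‖(a + n • v) - (b + n • v)‖ = ‖b - a‖ := by
        rw [show (a + n • v) - (b + n • v) = -(b - a) by abel, norm_neg]
      rw [he] at h
      exact h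
    have hba' : dist (ψ (a + n • v)) (ψ (b + n • v)) ≤ ‖b - a‖ := by
      rw [dist_comm]; exact hab'
    have ea := hscale a v hv n
    have eb := hscale b v hv n
    rw [ea, eb] at h1 h2
    have habs : |(n:ℝ) * (dist (ψ a) (ψ (a + v)) - dist (ψ b) (ψ (b + v)))| ≤ 2 * ‖b - a‖ := by
      rw [abs_le]
      constructor <;> nlinarith [h1, h2, hab, hba, hab', hba']
    calc (n:ℝ) * |dist (ψ a) (ψ (a + v)) - dist (ψ b) (ψ (b + v))|
        = |(n:ℝ) * (dist (ψ a) (ψ (a + v)) - dist (ψ b) (ψ (b + v)))| := by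
          rw [abs_mul, Nat.abs_cast]
      _ ≤ 2 * ‖b - a‖ := habs
  constructor
  · exact main φ₁ (fun a' v' hv' n => (scale_aux φ₁ φ₂ hd a' v' hv' n).1) hlip₁
  · -- same argument with components swapped
    have hd' : ∀ a b : V, dist (φ₂ a) (φ₂ b) ^ 2 + dist (φ₁ a) (φ₁ b) ^ 2 = ‖b - a‖ ^ 2 := by
      intro a b; linarith [hd a b]
    have main₂ : ∀ (ψ₁ : V → X₂),
        (∀ a' v' : V, v' ≠ 0 → ∀ n : ℕ,
          dist (ψ₁ a') (ψ₁ (a' + n • v')) = n * dist (ψ₁ a') (ψ₁ (a' + v'))) →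
        (∀ x y : V, dist (ψ₁ x) (ψ₁ y) ≤ ‖y - x‖) →
        dist (ψ₁ a) (ψ₁ (a + v)) = dist (ψ₁ b) (ψ₁ (b + v)) := by
      intro ψ hscale hlip
      apply sub_eq_zero.mp
      apply arch_zero _ (2 * ‖b - a‖)
      intro n
      have h1 : dist (ψ a) (ψ (a + n • v)) ≤
          dist (ψ a) (ψ b) + dist (ψ b) (ψ (b + n • v)) + dist (ψ (b + n • v)) (ψ (a + n • v)) := by
        linarith [dist_triangle (ψ a) (ψ b) (ψ (a + n • v)),
          dist_triangle (ψ b) (ψ (b + n • v)) (ψ (a + n • v))]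
      have h2 : dist (ψ b) (ψ (b + n • v)) ≤
          dist (ψ b) (ψ a) + dist (ψ a) (ψ (a + n • v)) + dist (ψ (a + n • v)) (ψ (b + n • v)) := by
        linarith [dist_triangle (ψ b) (ψ a) (ψ (b + n • v)),
          dist_triangle (ψ a) (ψ (a + n • v)) (ψ (b + n • v))]
      have hab : dist (ψ a) (ψ b) ≤ ‖b - a‖ := hlip a b
      have hba : dist (ψ b) (ψ a) ≤ ‖b - a‖ := by rw [dist_comm]; exact hab
      have hab' : dist (ψ (b + n • v)) (ψ (a + n • v)) ≤ ‖b - a‖ := by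
        have h := hlip (b + n • v) (a + n • v)
        have he : ‖(a + n • v) - (b + n • v)‖ = ‖b - a‖ := by
          rw [show (a + n • v) - (b + n • v) = -(b - a) by abel, norm_neg]
        rw [he] at h
        exact h
      have hba' : dist (ψ (a + n • v)) (ψ (b + n • v)) ≤ ‖b - a‖ := by
        rw [dist_comm]; exact hab'
      have ea := hscale a v hv n
      have eb := hscale b v hv n
      rw [ea, eb] at h1 h2
      have habs : |(n:ℝ) * (dist (ψ a) (ψ (a + v)) - dist (ψ b) (ψ (b + v)))| ≤ 2 * ‖b - a‖ := by
        rw [abs_le]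
        constructor <;> nlinarith [h1, h2, hab, hba, hab', hba']
      calc (n:ℝ) * |dist (ψ a) (ψ (a + v)) - dist (ψ b) (ψ (b + v))|
          = |(n:ℝ) * (dist (ψ a) (ψ (a + v)) - dist (ψ b) (ψ (b + v)))| := by
            rw [abs_mul, Nat.abs_cast]
        _ ≤ 2 * ‖b - a‖ := habs
    exact main₂ φ₂ (fun a' v' hv' n => (scale_aux φ₁ φ₂ hd a' v' hv' n).2) hlip₂
end

section
/- Let (X₁,d₁), (X₂,d₂) be metric spaces, X = X₁ × X₂ with the ℓ² product metric, V a real normed vector space, and φ = (φ₁,φ₂) : V → X an isometric map. Then there exist seminorms ‖·‖₁ and ‖·‖₂ on V such that ‖v‖² = ‖v‖₁² + ‖v‖₂² for all v ∈ V, and dᵢ(φᵢ(a),φᵢ(b)) = ‖b−a‖ᵢ for all a, b ∈ V, i = 1,2. -/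
private lemma eq_of_sq_eq {x y : ℝ} (hx : 0 ≤ x) (hy : 0 ≤ y) (h : x ^ 2 = y ^ 2) : x = y := by
  rw [← Real.sqrt_sq hx, ← Real.sqrt_sq hy, h]

private lemma ray_lemma {p q c₁ c₂ t : ℝ} (hp : 0 ≤ p) (hq : 0 ≤ q) (hc₁ : 0 ≤ c₁)
    (hc₂ : 0 ≤ c₂) (ht : 0 ≤ t) (hcross : p * c₂ = q * c₁)
    (hnorm : p ^ 2 + q ^ 2 = t ^ 2 * (c₁ ^ 2 + c₂ ^ 2)) : p = t * c₁ ∧ q = t * c₂ := by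
  have h1 : p * c₁ + q * c₂ = t * (c₁ ^ 2 + c₂ ^ 2) := by
    have hx : 0 ≤ p * c₁ + q * c₂ := by positivity
    have hy : 0 ≤ t * (c₁ ^ 2 + c₂ ^ 2) := by positivity
    have hA : (p * c₁ + q * c₂) ^ 2 = (t * (c₁ ^ 2 + c₂ ^ 2)) ^ 2 := by
      nlinarith [hcross, hnorm, sq_nonneg (p*c₂ - q*c₁)]
    exact eq_of_sq_eq hx hy hA
  have key : (p - t * c₁) ^ 2 + (q - t * c₂) ^ 2 = 0 := by
    linear_combination hnorm - 2 * t * h1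
  constructor
  · nlinarith [sq_nonneg (p - t * c₁), sq_nonneg (q - t * c₂)]
  · nlinarith [sq_nonneg (p - t * c₁), sq_nonneg (q - t * c₂)]

private lemma core_lemma {p q u w P Q α β : ℝ} (hp : 0 ≤ p) (hq : 0 ≤ q) (hu : 0 ≤ u)
    (hw : 0 ≤ w) (hP : 0 ≤ P) (hQ : 0 ≤ Q) (hα : 0 ≤ α) (hβ : 0 ≤ β)
    (h1 : p ^ 2 + q ^ 2 = α ^ 2) (h2 : u ^ 2 + w ^ 2 = β ^ 2)
    (h3 : P ^ 2 + Q ^ 2 = (α + β) ^ 2)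
    (h4 : P ≤ p + u) (h5 : Q ≤ q + w) :
    P = p + u ∧ Q = q + w ∧ p * w = q * u := by
  have hcs : p * u + q * w ≤ α * β := by
    have hx : 0 ≤ p * u + q * w := by positivity
    have hy : 0 ≤ α * β := by positivity
    have hsq : (p * u + q * w) ^ 2 ≤ (α * β) ^ 2 := by
      nlinarith [sq_nonneg (p * w - q * u)]
    nlinarith [hsq, hx, hy]
  have e1 : P ^ 2 ≤ (p + u) ^ 2 := by nlinarith
  have e2 : Q ^ 2 ≤ (q + w) ^ 2 := by nlinarith
  have e3 : p * u + q * w = α * β := by nlinarith [e1, e2, hcs]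
  have e4 : P ^ 2 + Q ^ 2 = (p + u) ^ 2 + (q + w) ^ 2 := by
    linear_combination h3 - h1 - h2 - 2 * e3
  refine ⟨?_, ?_, ?_⟩
  · exact eq_of_sq_eq hP (by positivity) (by linarith)
  · exact eq_of_sq_eq hQ (by positivity) (by linarith)
  · have hz : (p * w - q * u) ^ 2 = 0 := by
      linear_combination (u ^ 2 + w ^ 2) * h1 + α ^ 2 * h2 - (p * u + q * w + α * β) * e3
    have := pow_eq_zero_iff (n := 2) (by norm_num) |>.mp hz
    linarith [this]

/-- If `φ = (φ₁, φ₂) : V → X₁ × X₂` is isometric for the ℓ² product metric, then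
there are seminorms `N₁, N₂` on `V` with `‖v‖² = N₁(v)² + N₂(v)²` and
`dᵢ(φᵢ a, φᵢ b) = Nᵢ(b - a)`. -/
theorem stmt4 {X₁ X₂ : Type*} [MetricSpace X₁] [MetricSpace X₂]
    {V : Type*} [NormedAddCommGroup V] [NormedSpace ℝ V]
    (φ₁ : V → X₁) (φ₂ : V → X₂)
    (hiso : ∀ a b : V,
      Real.sqrt (dist (φ₁ a) (φ₁ b) ^ 2 + dist (φ₂ a) (φ₂ b) ^ 2) = ‖b - a‖) :
    ∃ N₁ N₂ : V → ℝ,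
      (∀ v, 0 ≤ N₁ v) ∧ (∀ (c : ℝ) (v : V), N₁ (c • v) = |c| * N₁ v) ∧
      (∀ v w, N₁ (v + w) ≤ N₁ v + N₁ w) ∧
      (∀ v, 0 ≤ N₂ v) ∧ (∀ (c : ℝ) (v : V), N₂ (c • v) = |c| * N₂ v) ∧
      (∀ v w, N₂ (v + w) ≤ N₂ v + N₂ w) ∧
      (∀ v : V, ‖v‖ ^ 2 = N₁ v ^ 2 + N₂ v ^ 2) ∧
      (∀ a b : V, dist (φ₁ a) (φ₁ b) = N₁ (b - a)) ∧
      (∀ a b : V, dist (φ₂ a) (φ₂ b) = N₂ (b - a)) := by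
  -- squared isometry identity
  have hsq : ∀ a b : V,
      dist (φ₁ a) (φ₁ b) ^ 2 + dist (φ₂ a) (φ₂ b) ^ 2 = ‖b - a‖ ^ 2 := by
    intro a b
    have h := hiso a b
    have hnn : (0:ℝ) ≤ dist (φ₁ a) (φ₁ b) ^ 2 + dist (φ₂ a) (φ₂ b) ^ 2 := by positivity
    calc dist (φ₁ a) (φ₁ b) ^ 2 + dist (φ₂ a) (φ₂ b) ^ 2
        = Real.sqrt (dist (φ₁ a) (φ₁ b) ^ 2 + dist (φ₂ a) (φ₂ b) ^ 2) ^ 2 :=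
          (Real.sq_sqrt hnn).symm
      _ = ‖b - a‖ ^ 2 := by rw [h]
  have hle₁ : ∀ a b : V, dist (φ₁ a) (φ₁ b) ≤ ‖b - a‖ := by
    intro a b
    nlinarith [hsq a b, dist_nonneg (x := φ₁ a) (y := φ₁ b),
      dist_nonneg (x := φ₂ a) (y := φ₂ b), norm_nonneg (b - a), sq_nonneg (dist (φ₂ a) (φ₂ b))]
  have hle₂ : ∀ a b : V, dist (φ₂ a) (φ₂ b) ≤ ‖b - a‖ := by
    intro a b
    nlinarith [hsq a b, dist_nonneg (x := φ₁ a) (y := φ₁ b),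
      dist_nonneg (x := φ₂ a) (y := φ₂ b), norm_nonneg (b - a)]
  -- collinearity equality along segments
  have hseg : ∀ (a v : V) (s t : ℝ), 0 ≤ s → s ≤ t →
      dist (φ₁ a) (φ₁ (a + t • v))
        = dist (φ₁ a) (φ₁ (a + s • v)) + dist (φ₁ (a + s • v)) (φ₁ (a + t • v)) ∧
      dist (φ₂ a) (φ₂ (a + t • v))
        = dist (φ₂ a) (φ₂ (a + s • v)) + dist (φ₂ (a + s • v)) (φ₂ (a + t • v)) ∧
      dist (φ₁ a) (φ₁ (a + s • v)) * dist (φ₂ (a + s • v)) (φ₂ (a + t • v))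
        = dist (φ₂ a) (φ₂ (a + s • v)) * dist (φ₁ (a + s • v)) (φ₁ (a + t • v)) := by
    intro a v s t hs hst
    have ht : 0 ≤ t := le_trans hs hst
    have n1 : ‖(a + s • v) - a‖ = s * ‖v‖ := by
      rw [add_sub_cancel_left, norm_smul, Real.norm_eq_abs, abs_of_nonneg hs]
    have n2 : ‖(a + t • v) - (a + s • v)‖ = (t - s) * ‖v‖ := by
      have : (a + t • v) - (a + s • v) = (t - s) • v := by
        rw [sub_smul]; abel
      rw [this, norm_smul, Real.norm_eq_abs, abs_of_nonneg (by linarith)]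
    have n3 : ‖(a + t • v) - a‖ = t * ‖v‖ := by
      rw [add_sub_cancel_left, norm_smul, Real.norm_eq_abs, abs_of_nonneg ht]
    have h1 := hsq a (a + s • v)
    have h2 := hsq (a + s • v) (a + t • v)
    have h3 := hsq a (a + t • v)
    rw [n1] at h1; rw [n2] at h2; rw [n3] at h3
    have hsum : t * ‖v‖ = s * ‖v‖ + (t - s) * ‖v‖ := by ring
    rw [hsum] at h3
    have htri₁ := dist_triangle (φ₁ a) (φ₁ (a + s • v)) (φ₁ (a + t • v))
    have htri₂ := dist_triangle (φ₂ a) (φ₂ (a + s • v)) (φ₂ (a + t • v))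
    have := core_lemma (α := s * ‖v‖) (β := (t - s) * ‖v‖) dist_nonneg dist_nonneg
      dist_nonneg dist_nonneg dist_nonneg dist_nonneg
      (mul_nonneg hs (norm_nonneg v)) (mul_nonneg (by linarith) (norm_nonneg v)) h1 h2 h3 htri₁ htri₂
    exact this
  -- linearity along rays
  have hlin : ∀ (a v : V) (t : ℝ), 0 ≤ t →
      dist (φ₁ a) (φ₁ (a + t • v)) = t * dist (φ₁ a) (φ₁ (a + v)) ∧
      dist (φ₂ a) (φ₂ (a + t • v)) = t * dist (φ₂ a) (φ₂ (a + v)) := by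
    intro a v t ht
    have hn2 := hsq a (a + v)
    rw [add_sub_cancel_left] at hn2
    rcases le_or_gt t 1 with h1 | h1
    · obtain ⟨e1, e2, e3⟩ := hseg a v t 1 ht h1
      rw [one_smul] at e1 e2 e3
      have hn1 := hsq a (a + t • v)
      have nn1 : ‖a + t • v - a‖ = t * ‖v‖ := by
        rw [add_sub_cancel_left, norm_smul, Real.norm_eq_abs, abs_of_nonneg ht]
      rw [nn1] at hn1
      have hnorm : dist (φ₁ a) (φ₁ (a + t • v)) ^ 2 + dist (φ₂ a) (φ₂ (a + t • v)) ^ 2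
          = t ^ 2 * (dist (φ₁ a) (φ₁ (a + v)) ^ 2 + dist (φ₂ a) (φ₂ (a + v)) ^ 2) := by
        linear_combination hn1 - t ^ 2 * hn2
      have hcross : dist (φ₁ a) (φ₁ (a + t • v)) * dist (φ₂ a) (φ₂ (a + v))
          = dist (φ₂ a) (φ₂ (a + t • v)) * dist (φ₁ a) (φ₁ (a + v)) := by
        rw [e1, e2]; linear_combination e3
      exact ray_lemma dist_nonneg dist_nonneg dist_nonneg dist_nonneg ht hcross hnorm
    · obtain ⟨e1, e2, e3⟩ := hseg a v 1 t zero_le_one h1.le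
      rw [one_smul] at e1 e2 e3
      have hn1 := hsq (a + v) (a + t • v)
      have nn1 : ‖a + t • v - (a + v)‖ = (t - 1) * ‖v‖ := by
        have hv : a + t • v - (a + v) = (t - 1) • v := by
          rw [sub_smul, one_smul]; abel
        rw [hv, norm_smul, Real.norm_eq_abs, abs_of_nonneg (by linarith)]
      rw [nn1] at hn1
      have hnorm : dist (φ₁ (a + v)) (φ₁ (a + t • v)) ^ 2
            + dist (φ₂ (a + v)) (φ₂ (a + t • v)) ^ 2
          = (t - 1) ^ 2 * (dist (φ₁ a) (φ₁ (a + v)) ^ 2 + dist (φ₂ a) (φ₂ (a + v)) ^ 2) := by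
        linear_combination hn1 - (t - 1) ^ 2 * hn2
      have hcross : dist (φ₁ (a + v)) (φ₁ (a + t • v)) * dist (φ₂ a) (φ₂ (a + v))
          = dist (φ₂ (a + v)) (φ₂ (a + t • v)) * dist (φ₁ a) (φ₁ (a + v)) := by
        linear_combination -e3
      obtain ⟨hu, hw⟩ := ray_lemma dist_nonneg dist_nonneg dist_nonneg dist_nonneg
        (t := t - 1) (by linarith) hcross hnorm
      constructor
      · rw [e1, hu]; ring
      · rw [e2, hw]; ring
  -- translation invariance
  have hinv : ∀ (a v : V),
      dist (φ₁ a) (φ₁ (a + v)) = dist (φ₁ 0) (φ₁ (0 + v)) ∧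
      dist (φ₂ a) (φ₂ (a + v)) = dist (φ₂ 0) (φ₂ (0 + v)) := by
    intro a v
    have key : ∀ n : ℝ, 0 ≤ n →
        n * |dist (φ₁ a) (φ₁ (a + v)) - dist (φ₁ 0) (φ₁ (0 + v))| ≤ 2 * ‖a‖ ∧
        n * |dist (φ₂ a) (φ₂ (a + v)) - dist (φ₂ 0) (φ₂ (0 + v))| ≤ 2 * ‖a‖ := by
      intro n hn
      obtain ⟨l1, l2⟩ := hlin a v n hn
      obtain ⟨m1, m2⟩ := hlin 0 v n hn
      have hdiff : (0:V) + n • v - (a + n • v) = -a := by abel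
      have d1 : dist (φ₁ a) (φ₁ 0) ≤ ‖a‖ := by
        have := hle₁ a 0; rwa [zero_sub, norm_neg] at this
      have d1' : dist (φ₂ a) (φ₂ 0) ≤ ‖a‖ := by
        have := hle₂ a 0; rwa [zero_sub, norm_neg] at this
      have d2 : dist (φ₁ (a + n • v)) (φ₁ (0 + n • v)) ≤ ‖a‖ := by
        have := hle₁ (a + n • v) (0 + n • v); rwa [hdiff, norm_neg] at this
      have d2' : dist (φ₂ (a + n • v)) (φ₂ (0 + n • v)) ≤ ‖a‖ := by
        have := hle₂ (a + n • v) (0 + n • v); rwa [hdiff, norm_neg] at this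
      constructor
      · have t1 := dist_triangle4 (φ₁ a) (φ₁ 0) (φ₁ (0 + n • v)) (φ₁ (a + n • v))
        have t2 := dist_triangle4 (φ₁ 0) (φ₁ a) (φ₁ (a + n • v)) (φ₁ (0 + n • v))
        rw [l1, m1] at t1 t2
        rw [dist_comm (φ₁ (0 + n • v)) (φ₁ (a + n • v))] at t1
        rw [dist_comm (φ₁ 0) (φ₁ a)] at t2
        have habs : n * |dist (φ₁ a) (φ₁ (a + v)) - dist (φ₁ 0) (φ₁ (0 + v))|
            = |n * dist (φ₁ a) (φ₁ (a + v)) - n * dist (φ₁ 0) (φ₁ (0 + v))| := by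
          rw [← mul_sub, abs_mul, abs_of_nonneg hn]
        rw [habs, abs_sub_le_iff]
        constructor <;> linarith
      · have t1 := dist_triangle4 (φ₂ a) (φ₂ 0) (φ₂ (0 + n • v)) (φ₂ (a + n • v))
        have t2 := dist_triangle4 (φ₂ 0) (φ₂ a) (φ₂ (a + n • v)) (φ₂ (0 + n • v))
        rw [l2, m2] at t1 t2
        rw [dist_comm (φ₂ (0 + n • v)) (φ₂ (a + n • v))] at t1
        rw [dist_comm (φ₂ 0) (φ₂ a)] at t2
        have habs : n * |dist (φ₂ a) (φ₂ (a + v)) - dist (φ₂ 0) (φ₂ (0 + v))|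
            = |n * dist (φ₂ a) (φ₂ (a + v)) - n * dist (φ₂ 0) (φ₂ (0 + v))| := by
          rw [← mul_sub, abs_mul, abs_of_nonneg hn]
        rw [habs, abs_sub_le_iff]
        constructor <;> linarith
    have conc : ∀ x y : ℝ, (∀ n : ℝ, 0 ≤ n → n * |x - y| ≤ 2 * ‖a‖) → x = y := by
      intro x y h
      by_contra hne
      have hpos : 0 < |x - y| := abs_pos.mpr (sub_ne_zero.mpr hne)
      have h' := h ((2 * ‖a‖ + 1) / |x - y|) (by positivity)
      rw [div_mul_cancel₀ _ (ne_of_gt hpos)] at h'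
      linarith
    exact ⟨conc _ _ fun n hn => (key n hn).1, conc _ _ fun n hn => (key n hn).2⟩
  -- the seminorms
  have hdist₁ : ∀ a b : V, dist (φ₁ a) (φ₁ b) = dist (φ₁ 0) (φ₁ (b - a)) := by
    intro a b
    have := (hinv a (b - a)).1
    rwa [add_sub_cancel, zero_add] at this
  have hdist₂ : ∀ a b : V, dist (φ₂ a) (φ₂ b) = dist (φ₂ 0) (φ₂ (b - a)) := by
    intro a b
    have := (hinv a (b - a)).2
    rwa [add_sub_cancel, zero_add] at this
  have hneg₁ : ∀ u : V, dist (φ₁ 0) (φ₁ (-u)) = dist (φ₁ 0) (φ₁ u) := by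
    intro u
    rw [dist_comm, hdist₁]; simp
  have hneg₂ : ∀ u : V, dist (φ₂ 0) (φ₂ (-u)) = dist (φ₂ 0) (φ₂ u) := by
    intro u
    rw [dist_comm, hdist₂]; simp
  have hhom₁ : ∀ (c : ℝ) (v : V),
      dist (φ₁ 0) (φ₁ (c • v)) = |c| * dist (φ₁ 0) (φ₁ v) := by
    intro c v
    rcases le_or_gt 0 c with hc | hc
    · have := (hlin 0 v c hc).1
      simp only [zero_add] at this
      rw [this, abs_of_nonneg hc]
    · have h' := (hlin 0 v (-c) (by linarith)).1
      simp only [zero_add] at h'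
      have hcv : c • v = -((-c) • v) := by rw [neg_smul, neg_neg]
      rw [hcv, hneg₁, h', abs_of_neg hc]
  have hhom₂ : ∀ (c : ℝ) (v : V),
      dist (φ₂ 0) (φ₂ (c • v)) = |c| * dist (φ₂ 0) (φ₂ v) := by
    intro c v
    rcases le_or_gt 0 c with hc | hc
    · have := (hlin 0 v c hc).2
      simp only [zero_add] at this
      rw [this, abs_of_nonneg hc]
    · have h' := (hlin 0 v (-c) (by linarith)).2
      simp only [zero_add] at h'
      have hcv : c • v = -((-c) • v) := by rw [neg_smul, neg_neg]
      rw [hcv, hneg₂, h', abs_of_neg hc]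
  refine ⟨fun v => dist (φ₁ 0) (φ₁ v), fun v => dist (φ₂ 0) (φ₂ v),
    fun v => dist_nonneg, hhom₁, ?_, fun v => dist_nonneg, hhom₂, ?_, ?_, ?_, ?_⟩
  · intro v w
    calc dist (φ₁ 0) (φ₁ (v + w))
        ≤ dist (φ₁ 0) (φ₁ v) + dist (φ₁ v) (φ₁ (v + w)) := dist_triangle _ _ _
      _ = dist (φ₁ 0) (φ₁ v) + dist (φ₁ 0) (φ₁ w) := by
          rw [hdist₁ v (v + w), add_sub_cancel_left]
  · intro v w
    calc dist (φ₂ 0) (φ₂ (v + w))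
        ≤ dist (φ₂ 0) (φ₂ v) + dist (φ₂ v) (φ₂ (v + w)) := dist_triangle _ _ _
      _ = dist (φ₂ 0) (φ₂ v) + dist (φ₂ 0) (φ₂ w) := by
          rw [hdist₂ v (v + w), add_sub_cancel_left]
  · intro v
    have := hsq 0 v
    rw [sub_zero] at this
    linarith
  · intro a b; exact hdist₁ a b
  · intro a b; exact hdist₂ a b
end

section
/- In a real normed vector space, two ellipses that coincide in at least 5 points are equal. Here an ellipse is a set {a + cos(α)v₁ + sin(α)v₂ : α ∈ [0,2π]} with v₁, v₂ linearly independent. -/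
/-- An ellipse in a real vector space: the set `{a + cos α • v₁ + sin α • v₂}` with
`v₁, v₂` linearly independent. -/
def IsEllipse {V : Type*} [AddCommGroup V] [Module ℝ V] (E : Set V) : Prop :=
  ∃ (a v₁ v₂ : V), LinearIndependent ℝ ![v₁, v₂] ∧
    E = {p | ∃ α : ℝ, p = a + Real.cos α • v₁ + Real.sin α • v₂}

/-!
Parametrize an ellipse by the unit circle of `ℂ`, `z ↦ a + re z • v₁ + im z • v₂`. Along the
parametrization of the first ellipse, lying on the second one means that an affine expression in
`(re z, im z)` vanishes (the point lies in the plane of the second ellipse) and that a quadratic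
one equals `1`. On the unit circle such expressions are trigonometric polynomials `f` of degree
at most `2`, and since `conj z = z⁻¹` there, `z² f(z)` is a complex polynomial of degree at most
`4`. Vanishing at `5` points of the circle therefore forces them to vanish on the whole circle.
-/

open Polynomial Complex ComplexConjugate Finset Metric

theorem LinearMap.apply_eq_re_smul_add_im_smul {M : Type*} [AddCommGroup M] [Module ℝ M]
    (L : ℂ →ₗ[ℝ] M) (z : ℂ) : L z = z.re • L 1 + z.im • L I := by
  rw [← map_smul, ← map_smul, ← map_add]
  congr 1
  apply Complex.ext <;> simp

theorem re_sq_add_im_sq_eq_one {z : ℂ} (hz : z ∈ sphere (0 : ℂ) 1) : z.re ^ 2 + z.im ^ 2 = 1 := by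
  rw [← normSq_add_mul_I, re_add_im, normSq_eq_norm_sq, mem_sphere_zero_iff_norm.1 hz, one_pow]

theorem trig_quadratic_coeffs_eq_zero {c : ℝ} {β₁ β₂ : ℂ} (Z : Finset ℂ)
    (hZ : (Z : Set ℂ) ⊆ sphere 0 1) (hcard : 5 ≤ #Z)
    (h : ∀ z ∈ Z, c + (β₁ * z).re + (β₂ * z ^ 2).re = 0) :
    c = 0 ∧ β₁ = 0 ∧ β₂ = 0 := by
  set Q : ℂ[X] := C β₂ * X ^ 4 + C β₁ * X ^ 3 + C (2 * c : ℂ) * X ^ 2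
    + C (conj β₁) * X + C (conj β₂) with hQ
  have hQZ : ∀ z ∈ Z, Q.eval z = 0 := by
    intro z hz
    have hzz : z * conj z = 1 := by
      rw [mul_conj, normSq_eq_norm_sq, mem_sphere_zero_iff_norm.1 (hZ hz)]; norm_num
    have hz0 : ((c + (β₁ * z).re + (β₂ * z ^ 2).re : ℝ) : ℂ) = 0 := by exact_mod_cast h z hz
    push_cast at hz0
    simp only [re_eq_add_conj, map_mul, map_pow] at hz0
    simp only [hQ, eval_add, eval_mul, eval_pow, eval_C, eval_X]
    -- `2 z² f(z) = Q(z)` once `z * conj z = 1`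
    linear_combination (2 * z ^ 2) * hz0 - (conj β₁ * z + conj β₂ * (z * conj z + 1)) * hzz
  have hQ0 : Q = 0 := by
    refine eq_zero_of_natDegree_lt_card_of_eval_eq_zero' Q Z hQZ ?_
    have : Q.natDegree ≤ 4 := by rw [hQ]; compute_degree
    omega
  have h4 : Q.coeff 4 = β₂ := by simp [hQ, coeff_C_mul, -map_mul]
  have h3 : Q.coeff 3 = β₁ := by simp [hQ, coeff_C_mul, -map_mul]
  have h2 : Q.coeff 2 = 2 * c := by simp [hQ, coeff_C_mul, -map_mul]
  simp only [hQ0, coeff_zero] at h2 h3 h4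
  exact ⟨by exact_mod_cast (mul_eq_zero.1 h2.symm).resolve_left two_ne_zero, h3.symm, h4.symm⟩

theorem circle_quadratic_coeffs_eq_zero {c₀ c₁ c₂ c₃ c₄ : ℝ} (Z : Finset ℂ)
    (hZ : (Z : Set ℂ) ⊆ sphere 0 1) (hcard : 5 ≤ #Z)
    (h : ∀ z ∈ Z, c₀ + c₁ * z.re + c₂ * z.im + c₃ * (z.re ^ 2 - z.im ^ 2)
      + c₄ * (z.re * z.im) = 0) :
    c₀ = 0 ∧ c₁ = 0 ∧ c₂ = 0 ∧ c₃ = 0 ∧ c₄ = 0 := by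
  have := trig_quadratic_coeffs_eq_zero (c := c₀) (β₁ := ⟨c₁, -c₂⟩) (β₂ := ⟨c₃, -c₄ / 2⟩) Z hZ
    hcard fun z hz => by simp only [mul_re, mul_im, sq]; linear_combination h z hz
  simp only [Complex.ext_iff, zero_re, zero_im, neg_eq_zero, div_eq_zero_iff, two_ne_zero,
    or_false] at this
  obtain ⟨h₀, ⟨h₁, h₂⟩, h₃, h₄⟩ := this
  exact ⟨h₀, h₁, h₂, h₃, h₄⟩

theorem norm_affine_eq_one_on_sphere_of_five (w : ℂ) (L : ℂ →ₗ[ℝ] ℂ) (Z : Finset ℂ)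
    (hZ : (Z : Set ℂ) ⊆ sphere 0 1) (hcard : 5 ≤ #Z) (h : ∀ z ∈ Z, ‖w + L z‖ = 1) :
    ∀ z ∈ sphere (0 : ℂ) 1, ‖w + L z‖ = 1 := by
  set p := L 1
  set q := L I
  have hnorm : ∀ z : ℂ, ‖w + L z‖ = 1 ↔ (w.re + p.re * z.re + q.re * z.im) ^ 2
      + (w.im + p.im * z.re + q.im * z.im) ^ 2 = 1 := by
    intro z
    rw [← pow_eq_one_iff_of_nonneg (norm_nonneg _) two_ne_zero, L.apply_eq_re_smul_add_im_smul,
      Complex.sq_norm, normSq_apply]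
    simp only [p, q, add_re, add_im, smul_re, smul_im, smul_eq_mul]
    ring_nf
  -- expand, then use `x² = (1 + (x² - y²)) / 2` and `y² = (1 - (x² - y²)) / 2` on the circle
  obtain ⟨h₀, h₁, h₂, h₃, h₄⟩ := circle_quadratic_coeffs_eq_zero
      (c₀ := w.re ^ 2 + w.im ^ 2 + (p.re ^ 2 + q.re ^ 2 + p.im ^ 2 + q.im ^ 2) / 2 - 1)
      (c₁ := 2 * (w.re * p.re + w.im * p.im)) (c₂ := 2 * (w.re * q.re + w.im * q.im))
      (c₃ := (p.re ^ 2 + p.im ^ 2 - q.re ^ 2 - q.im ^ 2) / 2)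
      (c₄ := 2 * (p.re * q.re + p.im * q.im)) Z hZ hcard fun z hz => by
    linear_combination (hnorm z).1 (h z hz) -
      ((p.re ^ 2 + q.re ^ 2 + p.im ^ 2 + q.im ^ 2) / 2) * re_sq_add_im_sq_eq_one (hZ hz)
  intro z hz
  rw [hnorm]
  linear_combination h₀ + z.re * h₁ + z.im * h₂ + (z.re ^ 2 - z.im ^ 2) * h₃
    + (z.re * z.im) * h₄
    + ((p.re ^ 2 + q.re ^ 2 + p.im ^ 2 + q.im ^ 2) / 2) * re_sq_add_im_sq_eq_one hz
section
variable {V : Type*} [AddCommGroup V] [Module ℝ V]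

theorem affine_eq_zero_on_sphere_of_five (c : V) (ℓ : ℂ →ₗ[ℝ] V) (Z : Finset ℂ)
    (hZ : (Z : Set ℂ) ⊆ sphere 0 1) (hcard : 5 ≤ #Z) (h : ∀ z ∈ Z, c + ℓ z = 0) :
    ∀ z ∈ sphere (0 : ℂ) 1, c + ℓ z = 0 := by
  intro z _
  refine (Module.forall_dual_apply_eq_zero_iff ℝ _).1 fun φ => ?_
  have hφ : ∀ z, φ (c + ℓ z) = φ c + φ (ℓ 1) * z.re + φ (ℓ I) * z.im := by
    intro z
    rw [map_add, ℓ.apply_eq_re_smul_add_im_smul, map_add, map_smul, map_smul, smul_eq_mul,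
      smul_eq_mul]
    ring
  obtain ⟨h₀, h₁, h₂, -, -⟩ := circle_quadratic_coeffs_eq_zero (c₀ := φ c) (c₁ := φ (ℓ 1))
    (c₂ := φ (ℓ I)) (c₃ := 0) (c₄ := 0) Z hZ hcard
    fun z hz => by simpa [← hφ] using congrArg φ (h z hz)
  rw [hφ, h₀, h₁, h₂]
  ring

theorem mem_image_sphere_iff {ℓ : ℂ →ₗ[ℝ] V} {Ψ : V →ₗ[ℝ] ℂ} (hΨ : Ψ ∘ₗ ℓ = LinearMap.id)
    (a x : V) :
    x ∈ (fun z => a + ℓ z) '' sphere 0 1 ↔ ℓ (Ψ (x - a)) = x - a ∧ ‖Ψ (x - a)‖ = 1 := by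
  constructor
  · rintro ⟨z, hz, rfl⟩
    have hΨz : Ψ (ℓ z) = z := LinearMap.congr_fun hΨ z
    rw [add_sub_cancel_left, hΨz]
    exact ⟨rfl, mem_sphere_zero_iff_norm.1 hz⟩
  · rintro ⟨hx, hnorm⟩
    exact ⟨Ψ (x - a), mem_sphere_zero_iff_norm.2 hnorm, by simp only [hx, add_sub_cancel]⟩

theorem image_sphere_subset_of_five {ℓ₁ ℓ₂ : ℂ →ₗ[ℝ] V} (hℓ₂ : LinearMap.ker ℓ₂ = ⊥)
    {a₁ a₂ : V} {S : Finset V} (hS₁ : (S : Set V) ⊆ (fun z => a₁ + ℓ₁ z) '' sphere 0 1)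
    (hS₂ : (S : Set V) ⊆ (fun z => a₂ + ℓ₂ z) '' sphere 0 1) (hcard : 5 ≤ #S) :
    (fun z => a₁ + ℓ₁ z) '' sphere 0 1 ⊆ (fun z => a₂ + ℓ₂ z) '' sphere 0 1 := by
  classical
  obtain ⟨Ψ, hΨ⟩ := ℓ₂.exists_leftInverse_of_injective hℓ₂
  obtain ⟨Z, hZ, rfl⟩ := Finset.subset_set_image_iff.1 hS₁
  set P := LinearMap.id - ℓ₂ ∘ₗ Ψ
  have hmem : ∀ z, a₁ + ℓ₁ z ∈ (fun z => a₂ + ℓ₂ z) '' sphere 0 1 ↔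
      P (a₁ - a₂) + (P ∘ₗ ℓ₁) z = 0 ∧ ‖Ψ (a₁ - a₂) + (Ψ ∘ₗ ℓ₁) z‖ = 1 := by
    intro z
    have : a₁ + ℓ₁ z - a₂ = a₁ - a₂ + ℓ₁ z := by abel
    rw [mem_image_sphere_iff hΨ, this, LinearMap.comp_apply, LinearMap.comp_apply, ← map_add,
      ← map_add, eq_comm, ← sub_eq_zero]
    rfl
  have hZmem : ∀ z ∈ Z, _ := fun z hz => (hmem z).1 (hS₂ (mem_coe.2 (mem_image_of_mem _ hz)))
  have hZcard : 5 ≤ #Z := hcard.trans card_image_le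
  rintro _ ⟨z, hz, rfl⟩
  exact (hmem z).2
    ⟨affine_eq_zero_on_sphere_of_five _ _ Z hZ hZcard (fun z hz => (hZmem z hz).1) z hz,
      norm_affine_eq_one_on_sphere_of_five _ _ Z hZ hZcard (fun z hz => (hZmem z hz).2) z hz⟩

def Complex.linearMapOfPair (v₁ v₂ : V) : ℂ →ₗ[ℝ] V :=
  reLm.smulRight v₁ + imLm.smulRight v₂

theorem Complex.linearMapOfPair_apply (v₁ v₂ : V) (z : ℂ) :
    linearMapOfPair v₁ v₂ z = z.re • v₁ + z.im • v₂ := rfl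

theorem Complex.ker_linearMapOfPair {v₁ v₂ : V} (hv : LinearIndependent ℝ ![v₁, v₂]) :
    LinearMap.ker (linearMapOfPair v₁ v₂) = ⊥ := by
  refine LinearMap.ker_eq_bot'.2 fun z hz => ?_
  obtain ⟨hre, him⟩ := LinearIndependent.pair_iff.1 hv _ _ hz
  exact Complex.ext hre him

theorem setOf_cos_sin_eq_image_sphere (a v₁ v₂ : V) :
    {p | ∃ α : ℝ, p = a + Real.cos α • v₁ + Real.sin α • v₂} =
      (fun z => a + linearMapOfPair v₁ v₂ z) '' sphere 0 1 := by
  ext p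
  simp only [Set.mem_ofPred_eq, Set.mem_image, mem_sphere_zero_iff_norm, norm_eq_one_iff,
    linearMapOfPair_apply]
  constructor
  · rintro ⟨α, rfl⟩
    exact ⟨_, ⟨α, rfl⟩, by rw [exp_ofReal_mul_I_re, exp_ofReal_mul_I_im, add_assoc]⟩
  · rintro ⟨_, ⟨α, rfl⟩, rfl⟩
    exact ⟨α, by rw [exp_ofReal_mul_I_re, exp_ofReal_mul_I_im, add_assoc]⟩
end

/-- in a real normed vector space, two ellipses that coincide in at least
5 points are equal. -/
theorem stmt8 {V : Type*} [NormedAddCommGroup V] [NormedSpace ℝ V]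
    (E₁ E₂ : Set V) (h₁ : IsEllipse E₁) (h₂ : IsEllipse E₂)
    (S : Finset V) (hS : (S : Set V) ⊆ E₁ ∩ E₂) (hcard : 5 ≤ S.card) :
    E₁ = E₂ := by
  obtain ⟨a₁, u₁, u₂, hu, rfl⟩ := h₁
  obtain ⟨a₂, v₁, v₂, hv, rfl⟩ := h₂
  rw [setOf_cos_sin_eq_image_sphere, setOf_cos_sin_eq_image_sphere] at hS ⊢
  obtain ⟨hS₁, hS₂⟩ := Set.subset_inter_iff.1 hS
  exact (image_sphere_subset_of_five (ker_linearMapOfPair hv) hS₁ hS₂ hcard).antisymm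
    (image_sphere_subset_of_five (ker_linearMapOfPair hu) hS₂ hS₁ hcard)
end

section
/- Let Φ : [0,∞)ⁿ → [0,∞) be a function. Then for every choice of metric spaces (X₁,d₁),…,(Xₙ,dₙ), the function d_Φ((x₁,…,xₙ),(y₁,…,yₙ)) := Φ(d₁(x₁,y₁),…,dₙ(xₙ,yₙ)) is a metric on X₁ × ⋯ × Xₙ if and only if Φ satisfies: (A) Φ(q) ≥ 0 with Φ(q) = 0 ⟺ q = 0, and (B) for all q¹, q², q³ ∈ [0,∞)ⁿ with qʲ ≤ qᵏ + qˡ (coordinatewise, for every permutation {j,k,l} of {1,2,3}), one has Φ(qʲ) ≤ Φ(qᵏ) + Φ(qˡ). -/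
/-- Helper: in `ℝ × ℝ × ℝ` with sup metric, a max of three absolute values. -/
lemma stmt10_aux {u v w a : ℝ} (hu : |u| ≤ a) (hv : |v| ≤ a) (hw : |w| = a) :
    max |u| (max |v| |w|) = a := by
  rw [hw]
  have ha : 0 ≤ a := hw ▸ abs_nonneg w
  rw [max_eq_right hv, max_eq_right hu]

/-- `d_Φ` is a metric on every product `X₁ × ⋯ × Xₙ` of metric spaces iff
`Φ` satisfies (A) positive definiteness and (B) the triangle-type condition. -/
theorem stmt10 (n : ℕ) (Φ : (Fin n → ℝ) → ℝ) :
    ((∀ (X : Fin n → Type) (_ : ∀ i, MetricSpace (X i)),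
      (∀ x y : ∀ i, X i, 0 ≤ Φ (fun i => dist (x i) (y i))) ∧
      (∀ x y : ∀ i, X i, Φ (fun i => dist (x i) (y i)) = 0 ↔ x = y) ∧
      (∀ x y : ∀ i, X i,
        Φ (fun i => dist (x i) (y i)) = Φ (fun i => dist (y i) (x i))) ∧
      (∀ x y z : ∀ i, X i,
        Φ (fun i => dist (x i) (z i)) ≤
          Φ (fun i => dist (x i) (y i)) + Φ (fun i => dist (y i) (z i)))))
    ↔
    ((∀ q : Fin n → ℝ, (∀ i, 0 ≤ q i) → (0 ≤ Φ q ∧ (Φ q = 0 ↔ q = 0))) ∧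
     (∀ q₁ q₂ q₃ : Fin n → ℝ,
        (∀ i, 0 ≤ q₁ i) → (∀ i, 0 ≤ q₂ i) → (∀ i, 0 ≤ q₃ i) →
        (∀ i, q₁ i ≤ q₂ i + q₃ i) → (∀ i, q₂ i ≤ q₁ i + q₃ i) →
        (∀ i, q₃ i ≤ q₁ i + q₂ i) →
        Φ q₁ ≤ Φ q₂ + Φ q₃)) := by
  constructor
  · intro h
    constructor
    · -- (A) via X i = ℝ
      intro q hq
      obtain ⟨h1, h2, _, _⟩ := h (fun _ => ℝ) (fun _ => inferInstance)
      have key : (fun i => dist ((fun _ => (0:ℝ)) i) (q i)) = q := by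
        funext i
        simp [Real.dist_eq, abs_of_nonneg (hq i)]
      constructor
      · have := h1 (fun _ => (0:ℝ)) q
        rwa [key] at this
      · have := h2 (fun _ => (0:ℝ)) q
        rw [key] at this
        rw [this]
        constructor
        · intro he; funext i; exact (congrFun he i).symm
        · intro he; funext i; exact (congrFun he i).symm
    · -- (B) via X i = ℝ × ℝ × ℝ with sup metric, Fréchet embedding
      intro q₁ q₂ q₃ hq₁ hq₂ hq₃ t₁ t₂ t₃
      obtain ⟨_, _, _, h4⟩ := h (fun _ => ℝ × ℝ × ℝ) (fun _ => inferInstance)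
      set x : Fin n → ℝ × ℝ × ℝ := fun i => ((0:ℝ), q₂ i, q₁ i) with hx
      set y : Fin n → ℝ × ℝ × ℝ := fun i => (q₂ i, (0:ℝ), q₃ i) with hy
      set z : Fin n → ℝ × ℝ × ℝ := fun i => (q₁ i, q₃ i, (0:ℝ)) with hz
      have exz : (fun i => dist (x i) (z i)) = q₁ := by
        funext i
        simp only [hx, hz, Prod.dist_eq, Real.dist_eq]
        exact stmt10_aux
          (by rw [zero_sub, abs_neg, abs_of_nonneg (hq₁ i)])
          (abs_le.2 ⟨by linarith [t₃ i], by linarith [t₂ i]⟩)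
          (by rw [sub_zero, abs_of_nonneg (hq₁ i)])
      have exy : (fun i => dist (x i) (y i)) = q₂ := by
        funext i
        simp only [hx, hy, Prod.dist_eq, Real.dist_eq]
        rw [max_comm |q₂ i - 0| |q₁ i - q₃ i|]
        exact stmt10_aux
          (by rw [zero_sub, abs_neg, abs_of_nonneg (hq₂ i)])
          (abs_le.2 ⟨by linarith [t₃ i], by linarith [t₁ i]⟩)
          (by rw [sub_zero, abs_of_nonneg (hq₂ i)])
      have eyz : (fun i => dist (y i) (z i)) = q₃ := by
        funext i
        simp only [hy, hz, Prod.dist_eq, Real.dist_eq]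
        have h1 : |q₂ i - q₁ i| ≤ q₃ i :=
          abs_le.2 ⟨by linarith [t₁ i], by linarith [t₂ i]⟩
        have h2 : |0 - q₃ i| = q₃ i := by
          rw [zero_sub, abs_neg, abs_of_nonneg (hq₃ i)]
        have h3 : |q₃ i - 0| = q₃ i := by
          rw [sub_zero, abs_of_nonneg (hq₃ i)]
        rw [h2, h3, max_self]
        exact max_eq_right h1
      have := h4 x y z
      rwa [exz, exy, eyz] at this
  · intro ⟨hA, hB⟩ X inst
    refine ⟨?_, ?_, ?_, ?_⟩
    · intro x y
      exact (hA _ (fun i => dist_nonneg)).1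
    · intro x y
      rw [(hA _ (fun i => dist_nonneg)).2]
      constructor
      · intro he
        funext i
        exact dist_eq_zero.1 (congrFun he i)
      · intro he
        funext i
        rw [he]
        simp
    · intro x y
      congr 1
      funext i
      exact dist_comm _ _
    · intro x y z
      exact hB _ _ _ (fun i => dist_nonneg) (fun i => dist_nonneg)
        (fun i => dist_nonneg)
        (fun i => dist_triangle _ _ _)
        (fun i => by
          calc dist (x i) (y i) ≤ dist (x i) (z i) + dist (z i) (y i) :=
                dist_triangle _ _ _
            _ = dist (x i) (z i) + dist (y i) (z i) := by rw [dist_comm (z i)]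
        )
        (fun i => by
          calc dist (y i) (z i) ≤ dist (y i) (x i) + dist (x i) (z i) :=
                dist_triangle _ _ _
            _ = dist (x i) (z i) + dist (x i) (y i) := by
                rw [dist_comm (y i) (x i)]; ring
        )
end

section
/- Let Φ : [0,∞)ⁿ → [0,∞) satisfy: Φ(q) = 0 ⟺ q = 0, and the triangle-type condition (B): whenever q¹,q²,q³ ∈ [0,∞)ⁿ satisfy qʲ ≤ qᵏ + qˡ coordinatewise for all permutations {j,k,l} of {1,2,3}, then Φ(qʲ) ≤ Φ(qᵏ) + Φ(qˡ). Then for every ε > 0, the restriction of Φ to the complement of the Euclidean ε-ball around 0 in [0,∞)ⁿ has a positive lower bound. -/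
/-- if `Φ : [0,∞)ⁿ → [0,∞)` is positive definite and satisfies the
triangle-type condition (B), then on the complement of every Euclidean ε-ball around `0`
in `[0,∞)ⁿ` the function `Φ` has a positive lower bound. -/
theorem stmt11 (n : ℕ) (Φ : (Fin n → ℝ) → ℝ)
    (hnn : ∀ q : Fin n → ℝ, (∀ i, 0 ≤ q i) → 0 ≤ Φ q)
    (hdef : ∀ q : Fin n → ℝ, (∀ i, 0 ≤ q i) → (Φ q = 0 ↔ q = 0))
    (hB : ∀ q₁ q₂ q₃ : Fin n → ℝ,
        (∀ i, 0 ≤ q₁ i) → (∀ i, 0 ≤ q₂ i) → (∀ i, 0 ≤ q₃ i) →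
        (∀ i, q₁ i ≤ q₂ i + q₃ i) → (∀ i, q₂ i ≤ q₁ i + q₃ i) →
        (∀ i, q₃ i ≤ q₁ i + q₂ i) →
        Φ q₁ ≤ Φ q₂ + Φ q₃) :
    ∀ ε : ℝ, 0 < ε → ∃ c : ℝ, 0 < c ∧
      ∀ q : Fin n → ℝ, (∀ i, 0 ≤ q i) →
        ε ≤ Real.sqrt (∑ i, q i ^ 2) → c ≤ Φ q := by
  intro ε hε
  rcases Nat.eq_zero_or_pos n with hn | hn
  · refine ⟨1, one_pos, fun q hq hεq => ?_⟩
    exfalso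
    subst hn
    simp [Real.sqrt_eq_zero'] at hεq
    linarith
  · have : Nonempty (Fin n) := ⟨⟨0, hn⟩⟩
    have hsn : (0:ℝ) < Real.sqrt n := Real.sqrt_pos.mpr (by exact_mod_cast hn)
    set t : ℝ := ε / Real.sqrt n with ht
    have htpos : 0 < t := div_pos hε hsn
    set e : Fin n → Fin n → ℝ := fun i j => if j = i then t else 0 with he
    have hennn : ∀ i j, 0 ≤ e i j := by
      intro i j
      simp only [he]
      split
      · exact htpos.le
      · exact le_rfl
    have hepos : ∀ i, 0 < Φ (e i) := by
      intro i
      have hne : Φ (e i) ≠ 0 := by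
        intro h0
        have h1 := (hdef (e i) (hennn i)).mp h0
        have h2 := congrFun h1 i
        simp [he] at h2
        linarith
      exact lt_of_le_of_ne (hnn _ (hennn i)) (Ne.symm hne)
    set m : ℝ := Finset.univ.inf' Finset.univ_nonempty (fun i => Φ (e i)) with hm
    have hmpos : 0 < m := by
      rw [hm, Finset.lt_inf'_iff]
      intro i _
      exact hepos i
    refine ⟨m / 2, by positivity, fun q hq hεq => ?_⟩
    have hex : ∃ i, t ≤ q i := by
      by_contra hcon
      push_neg at hcon
      have hsum : ∑ i, q i ^ 2 < ∑ _i : Fin n, t ^ 2 := by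
        apply Finset.sum_lt_sum_of_nonempty Finset.univ_nonempty
        intro i _
        exact pow_lt_pow_left₀ (hcon i) (hq i) two_ne_zero
      have h2 : ∑ _i : Fin n, t ^ 2 = ε ^ 2 := by
        rw [Finset.sum_const, Finset.card_univ, Fintype.card_fin, nsmul_eq_mul, ht,
          div_pow, Real.sq_sqrt (Nat.cast_nonneg n)]
        field_simp
      have hlt : Real.sqrt (∑ i, q i ^ 2) < ε := by
        rw [Real.sqrt_lt' hε]
        linarith
      linarith
    obtain ⟨i, hi⟩ := hex
    have key : Φ (e i) ≤ Φ q + Φ q := by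
      apply hB (e i) q q (hennn i) hq hq
      · intro j
        simp only [he]
        split
        · next h => subst h; linarith
        · linarith [hq j]
      · intro j
        have := hennn i j
        linarith
      · intro j
        have := hennn i j
        linarith
    have hle : m ≤ Φ (e i) := by
      rw [hm]
      exact Finset.inf'_le _ (Finset.mem_univ i)
    linarith
end

section
/- Let Φ : [0,∞)ⁿ → [0,∞) satisfy conditions (1)–(4) (positive definiteness, monotonicity, subadditivity, positive homogeneity) so that Ψ(x) := Φ(|x₁|,…,|xₙ|) is a norm on ℝⁿ. Then Ψ is induced by an inner product on ℝⁿ if and only if Φ²(∑ᵢ λᵢeᵢ) = ∑ᵢ Φ²(λᵢeᵢ) for all λᵢ > 0; in that case the standard basis vectors e₁,…,eₙ are pairwise orthogonal for this inner product. -/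
/-- for `Φ` positive definite, monotone, subadditive and positively
homogeneous (so that `Ψ(x) = Φ(|x₁|,…,|xₙ|)` is a norm), `Ψ` satisfies the parallelogram
law (i.e. is induced by an inner product) iff `Φ²(∑ λᵢ eᵢ) = ∑ Φ²(λᵢ eᵢ)` for all
`λᵢ > 0`; and in that case the standard basis vectors are pairwise orthogonal, i.e.
`Ψ(eᵢ + eⱼ) = Ψ(eᵢ − eⱼ)` for `i ≠ j`. -/
theorem stmt15 (n : ℕ) (Φ : (Fin n → ℝ) → ℝ)
    (hnn : ∀ q : Fin n → ℝ, (∀ i, 0 ≤ q i) → 0 ≤ Φ q)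
    (hdef : ∀ q : Fin n → ℝ, (∀ i, 0 ≤ q i) → (Φ q = 0 ↔ q = 0))
    (hmono : ∀ p q : Fin n → ℝ, (∀ i, 0 ≤ q i) → (∀ i, q i ≤ p i) → Φ q ≤ Φ p)
    (hsub : ∀ p q : Fin n → ℝ, (∀ i, 0 ≤ p i) → (∀ i, 0 ≤ q i) → Φ (p + q) ≤ Φ p + Φ q)
    (hhom : ∀ (l : ℝ) (q : Fin n → ℝ), 0 ≤ l → (∀ i, 0 ≤ q i) → Φ (l • q) = l * Φ q) :
    (((∀ x y : Fin n → ℝ,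
        Φ (fun i => |(x + y) i|) ^ 2 + Φ (fun i => |(x - y) i|) ^ 2 =
          2 * Φ (fun i => |x i|) ^ 2 + 2 * Φ (fun i => |y i|) ^ 2)
      ↔
      (∀ l : Fin n → ℝ, (∀ i, 0 < l i) →
        Φ l ^ 2 = ∑ i, Φ (Pi.single i (l i)) ^ 2))
    ∧
    ((∀ x y : Fin n → ℝ,
        Φ (fun i => |(x + y) i|) ^ 2 + Φ (fun i => |(x - y) i|) ^ 2 =
          2 * Φ (fun i => |x i|) ^ 2 + 2 * Φ (fun i => |y i|) ^ 2) →
      ∀ i j : Fin n, i ≠ j →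
        Φ (fun k => |((Pi.single i 1 + Pi.single j 1 : Fin n → ℝ)) k|) =
          Φ (fun k => |((Pi.single i 1 - Pi.single j 1 : Fin n → ℝ)) k|))) := by
  -- disjointly supported vectors: |x+y| = |x-y| pointwise
  have habs : ∀ x y : Fin n → ℝ, (∀ k, x k = 0 ∨ y k = 0) →
      (fun k => |(x + y) k|) = (fun k => |(x - y) k|) := by
    intro x y h
    funext k
    rcases h k with h | h <;>
      simp [Pi.add_apply, Pi.sub_apply, h, abs_sub_comm]
  have hone : ∀ i : Fin n, ∀ k, (0:ℝ) ≤ (Pi.single i 1 : Fin n → ℝ) k := by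
    intro i k
    rcases eq_or_ne k i with rfl | hk
    · simp
    · simp [Pi.single_eq_of_ne hk]
  -- homogeneity for single vectors
  have hsingle : ∀ (i : Fin n) (t : ℝ), 0 ≤ t →
      Φ (Pi.single i t) = t * Φ (Pi.single i 1) := by
    intro i t ht
    have h1 : Pi.single i t = t • (Pi.single i 1 : Fin n → ℝ) := by
      funext k
      rcases eq_or_ne k i with rfl | hk
      · simp
      · simp [Pi.single_eq_of_ne hk]
    rw [h1, hhom t _ ht (hone i)]
  -- Forward direction
  have forward : (∀ x y : Fin n → ℝ,
        Φ (fun i => |(x + y) i|) ^ 2 + Φ (fun i => |(x - y) i|) ^ 2 =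
          2 * Φ (fun i => |x i|) ^ 2 + 2 * Φ (fun i => |y i|) ^ 2) →
      ∀ l : Fin n → ℝ, (∀ i, 0 < l i) →
        Φ l ^ 2 = ∑ i, Φ (Pi.single i (l i)) ^ 2 := by
    intro H l hl
    have key : ∀ s : Finset (Fin n),
        Φ (fun k => |(∑ i ∈ s, Pi.single i (l i) : Fin n → ℝ) k|) ^ 2
          = ∑ i ∈ s, Φ (Pi.single i (l i)) ^ 2 := by
      intro s
      induction s using Finset.induction with
      | empty =>
        have : (fun k => |(∑ i ∈ (∅ : Finset (Fin n)), Pi.single i (l i) : Fin n → ℝ) k|)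
            = (0 : Fin n → ℝ) := by
          funext k; simp
        rw [this, (hdef 0 (fun i => le_refl 0)).mpr rfl]
        simp
      | @insert a s ha ih =>
        set x : Fin n → ℝ := Pi.single a (l a) with hx
        set y : Fin n → ℝ := ∑ i ∈ s, Pi.single i (l i) with hy
        have hsum : (∑ i ∈ insert a s, Pi.single i (l i) : Fin n → ℝ) = x + y := by
          rw [Finset.sum_insert ha]
        have hynn : ∀ k, 0 ≤ y k := by
          intro k
          rw [hy]
          simp only [Finset.sum_apply]
          refine Finset.sum_nonneg fun i _ => ?_
          rcases eq_or_ne k i with rfl | hk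
          · simp [(hl k).le]
          · simp [Pi.single_eq_of_ne hk]
        have hxnn : ∀ k, 0 ≤ x k := by
          intro k
          rcases eq_or_ne k a with rfl | hk
          · simp [hx, (hl k).le]
          · simp [hx, Pi.single_eq_of_ne hk]
        have hdisj : ∀ k, x k = 0 ∨ y k = 0 := by
          intro k
          rcases eq_or_ne k a with rfl | hk
          · right
            rw [hy]
            simp only [Finset.sum_apply]
            refine Finset.sum_eq_zero fun i hi => ?_
            have : k ≠ i := fun h => ha (h ▸ hi)
            simp [Pi.single_eq_of_ne this.symm, Pi.single_eq_of_ne this]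
          · left; simp [hx, Pi.single_eq_of_ne hk]
        have heq := habs x y hdisj
        have hH := H x y
        rw [heq] at hH
        have habs_x : (fun k => |x k|) = x := by
          funext k; exact abs_of_nonneg (hxnn k)
        have habs_y : (fun k => |y k|) = y := by
          funext k; exact abs_of_nonneg (hynn k)
        have habs_xy : (fun k => |(x + y) k|) = fun k => |(x - y) k| := heq
        have hxy2 : Φ (fun k => |(x - y) k|) ^ 2 = Φ x ^ 2 + Φ y ^ 2 := by
          rw [habs_x, habs_y] at hH
          nlinarith [hH]
        rw [habs_y] at ih
        rw [hsum, habs_xy, hxy2, Finset.sum_insert ha, ih, hx]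
    have huniv := key Finset.univ
    have hluniv : (∑ i : Fin n, Pi.single i (l i) : Fin n → ℝ) = l :=
      Finset.univ_sum_single l
    rw [hluniv] at huniv
    have : (fun k => |l k|) = l := by
      funext k; exact abs_of_pos (hl k)
    rwa [this] at huniv
  -- extension of the additivity identity to all nonnegative vectors, by continuity
  have ext : (∀ l : Fin n → ℝ, (∀ i, 0 < l i) →
        Φ l ^ 2 = ∑ i, Φ (Pi.single i (l i)) ^ 2) →
      ∀ q : Fin n → ℝ, (∀ i, 0 ≤ q i) →
        Φ q ^ 2 = ∑ i, Φ (Pi.single i (q i)) ^ 2 := by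
    intro H q hq
    -- squeeze: Φ q ≤ Φ (q + ε) ≤ Φ q + ε Φ(1)
    have h1 : Filter.Tendsto (fun ε : ℝ => Φ (fun k => q k + ε))
        (nhdsWithin 0 (Set.Ioi 0)) (nhds (Φ q)) := by
      have hb : Filter.Tendsto (fun ε : ℝ => Φ q + ε * Φ (fun _ => 1))
          (nhdsWithin 0 (Set.Ioi 0)) (nhds (Φ q)) := by
        have h0 : Filter.Tendsto (fun ε : ℝ => Φ q + ε * Φ (fun _ => 1))
            (nhds 0) (nhds (Φ q + 0 * Φ (fun _ => 1))) :=
          (Filter.Tendsto.mul_const _ Filter.tendsto_id).const_add _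
        simpa using h0.mono_left nhdsWithin_le_nhds
      refine tendsto_of_tendsto_of_tendsto_of_le_of_le' tendsto_const_nhds hb ?_ ?_
      · filter_upwards [self_mem_nhdsWithin] with ε hε
        exact hmono _ q hq (fun i => by
          have : (0:ℝ) < ε := hε
          linarith)
      · filter_upwards [self_mem_nhdsWithin] with ε hε
        have hε' : (0:ℝ) < ε := hε
        have h2 : Φ (q + fun _ => ε) ≤ Φ q + Φ (fun _ => ε) :=
          hsub q (fun _ => ε) hq (fun i => hε'.le)
        have h3 : Φ (fun _ : Fin n => ε) = ε * Φ (fun _ => 1) := by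
          have : (fun _ : Fin n => ε) = ε • (fun _ : Fin n => (1:ℝ)) := by
            funext k; simp
          rw [this, hhom ε _ hε'.le (fun i => zero_le_one)]
        calc Φ (fun k => q k + ε) = Φ (q + fun _ => ε) := rfl
          _ ≤ Φ q + Φ (fun _ => ε) := h2
          _ = Φ q + ε * Φ (fun _ => 1) := by rw [h3]
    have h2 : Filter.Tendsto (fun ε : ℝ => Φ (fun k => q k + ε) ^ 2)
        (nhdsWithin 0 (Set.Ioi 0)) (nhds (Φ q ^ 2)) := h1.pow 2
    have h3 : Filter.Tendsto (fun ε : ℝ => ∑ i, Φ (Pi.single i (q i + ε)) ^ 2)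
        (nhdsWithin 0 (Set.Ioi 0)) (nhds (∑ i, Φ (Pi.single i (q i)) ^ 2)) := by
      refine tendsto_finset_sum _ fun i _ => ?_
      have hcong : (fun ε : ℝ => ((q i + ε) * Φ (Pi.single i 1)) ^ 2)
          =ᶠ[nhdsWithin 0 (Set.Ioi 0)] fun ε => Φ (Pi.single i (q i + ε)) ^ 2 := by
        filter_upwards [self_mem_nhdsWithin] with ε hε
        have hε' : (0:ℝ) < ε := hε
        conv_rhs => rw [hsingle i (q i + ε) (by linarith [hq i])]
      have hT : Filter.Tendsto (fun ε : ℝ => ((q i + ε) * Φ (Pi.single i 1)) ^ 2)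
          (nhdsWithin 0 (Set.Ioi 0)) (nhds (Φ (Pi.single i (q i)) ^ 2)) := by
        have h0 : Filter.Tendsto (fun ε : ℝ => ((q i + ε) * Φ (Pi.single i 1)) ^ 2)
            (nhds 0) (nhds (((q i + 0) * Φ (Pi.single i 1)) ^ 2)) := by
          exact (((tendsto_const_nhds.add Filter.tendsto_id).mul_const _).pow 2)
        have : ((q i + 0) * Φ (Pi.single i 1)) ^ 2 = Φ (Pi.single i (q i)) ^ 2 := by
          rw [add_zero, ← hsingle i _ (hq i)]
        rw [this] at h0
        exact h0.mono_left nhdsWithin_le_nhds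
      exact hT.congr' hcong
    have heq : (fun ε : ℝ => Φ (fun k => q k + ε) ^ 2)
        =ᶠ[nhdsWithin 0 (Set.Ioi 0)] fun ε => ∑ i, Φ (Pi.single i (q i + ε)) ^ 2 := by
      filter_upwards [self_mem_nhdsWithin] with ε hε
      have hε' : (0:ℝ) < ε := hε
      exact H (fun k => q k + ε) (fun i => by show 0 < q i + ε; linarith [hq i])
    exact tendsto_nhds_unique (h2.congr' heq) h3
  -- Backward direction
  have backward : (∀ l : Fin n → ℝ, (∀ i, 0 < l i) →
        Φ l ^ 2 = ∑ i, Φ (Pi.single i (l i)) ^ 2) →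
      ∀ x y : Fin n → ℝ,
        Φ (fun i => |(x + y) i|) ^ 2 + Φ (fun i => |(x - y) i|) ^ 2 =
          2 * Φ (fun i => |x i|) ^ 2 + 2 * Φ (fun i => |y i|) ^ 2 := by
    intro Hadd x y
    have key : ∀ z : Fin n → ℝ,
        Φ (fun k => |z k|) ^ 2 = ∑ i, (z i) ^ 2 * Φ (Pi.single i 1) ^ 2 := by
      intro z
      rw [ext Hadd (fun k => |z k|) (fun k => abs_nonneg _)]
      refine Finset.sum_congr rfl fun i _ => ?_
      rw [hsingle i _ (abs_nonneg _), mul_pow, sq_abs]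
    rw [key (x + y), key (x - y), key x, key y,
      ← Finset.sum_add_distrib, Finset.mul_sum, Finset.mul_sum, ← Finset.sum_add_distrib]
    refine Finset.sum_congr rfl fun i _ => ?_
    simp only [Pi.add_apply, Pi.sub_apply]
    ring
  refine ⟨⟨forward, backward⟩, fun _ i j hij => ?_⟩
  congr 1
  apply habs
  intro k
  rcases eq_or_ne k i with rfl | hk
  · right; exact Pi.single_eq_of_ne hij 1
  · left; exact Pi.single_eq_of_ne hk 1
end

section
/- Let Φ : [0,∞)ⁿ → [0,∞) be such that Ψ(x) := Φ(|x₁|,…,|xₙ|) is a norm on ℝⁿ induced by an inner product. Let (Vᵢ, ⟨·,·⟩ᵢ) be real inner product spaces, i = 1,…,n, and define the norm ‖(v₁,…,vₙ)‖_Φ := Φ(‖v₁‖₁,…,‖vₙ‖ₙ) on V = V₁ × ⋯ × Vₙ. Then ‖·‖_Φ is induced by the inner product ⟨v,w⟩_Φ = ∑ᵢ Φ²(eᵢ)·⟨vᵢ,wᵢ⟩ᵢ. -/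
/-!
A function `Q` on an abelian group satisfying the parallelogram law is a quadratic form in
the additive sense: its polarization `(Q (x + y) - Q (x - y)) / 4` is biadditive and symmetric
with diagonal `Q`. Apply this to `Q x = Ψ(x)² = Φ(|x₁|,…,|xₙ|)²` on `ℝⁿ`. Flipping the sign of
one coordinate does not change `Ψ`, so the coordinate vectors are pairwise orthogonal and
`Ψ(x)² = ∑ Ψ(xᵢ eᵢ)² = ∑ Φ(eᵢ)² xᵢ²`, the last step by homogeneity. For a nonnegative vector
`(‖v₁‖,…,‖vₙ‖)` this is `∑ Φ(eᵢ)² ⟨vᵢ,vᵢ⟩`, and the polarization identity in each `Vᵢ` gives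
the inner product formula.
-/

open scoped RealInnerProductSpace

noncomputable def polarization {G : Type*} [AddCommGroup G] (Q : G → ℝ) (x y : G) : ℝ :=
  (Q (x + y) - Q (x - y)) / 4

section Parallelogram

variable {G : Type*} [AddCommGroup G] {Q : G → ℝ}

theorem map_zero_of_parallelogram (hQ : ∀ x y, Q (x + y) + Q (x - y) = 2 * Q x + 2 * Q y) :
    Q 0 = 0 := by
  have h := hQ 0 0
  simp only [add_zero, sub_zero] at h
  linarith

theorem map_neg_of_parallelogram (hQ : ∀ x y, Q (x + y) + Q (x - y) = 2 * Q x + 2 * Q y)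
    (x : G) : Q (-x) = Q x := by
  have h := hQ 0 x
  simp only [zero_add, zero_sub, map_zero_of_parallelogram hQ] at h
  linarith

theorem polarization_comm (hQ : ∀ x y, Q (x + y) + Q (x - y) = 2 * Q x + 2 * Q y)
    (x y : G) : polarization Q x y = polarization Q y x := by
  rw [polarization, polarization, add_comm, ← neg_sub y x, map_neg_of_parallelogram hQ]

theorem polarization_self (hQ : ∀ x y, Q (x + y) + Q (x - y) = 2 * Q x + 2 * Q y) (x : G) :
    polarization Q x x = Q x := by
  have h := hQ x x
  rw [sub_self, map_zero_of_parallelogram hQ] at h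
  rw [polarization, sub_self, map_zero_of_parallelogram hQ]
  linarith

theorem polarization_add_left (hQ : ∀ x y, Q (x + y) + Q (x - y) = 2 * Q x + 2 * Q y)
    (x y z : G) : polarization Q (x + y) z = polarization Q x z + polarization Q y z := by
  -- the parallelogram law at `(x + z, y + z)` and `(x - z, y - z)` gives the additivity up
  -- to doubling `z`; the case `y = 0` of the same identity undoes the doubling
  have doubled (x y : G) :
      polarization Q x z + polarization Q y z = polarization Q (x + y) (z + z) / 2 := by
    have h₁ := hQ (x + z) (y + z)
    have h₂ := hQ (x - z) (y - z)
    rw [show x + z + (y + z) = x + y + (z + z) by abel, show x + z - (y + z) = x - y by abel]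
      at h₁
    rw [show x - z + (y - z) = x + y - (z + z) by abel, show x - z - (y - z) = x - y by abel]
      at h₂
    rw [polarization, polarization, polarization]
    linarith
  have hzero : polarization Q 0 z = 0 := by
    rw [polarization, zero_add, zero_sub, map_neg_of_parallelogram hQ, sub_self, zero_div]
  have halve := doubled (x + y) 0
  rw [hzero, add_zero, add_zero] at halve
  rw [doubled, halve]

theorem polarization_sum_left (hQ : ∀ x y, Q (x + y) + Q (x - y) = 2 * Q x + 2 * Q y)
    {ι : Type*} (s : Finset ι) (g : ι → G) (z : G) :
    polarization Q (∑ i ∈ s, g i) z = ∑ i ∈ s, polarization Q (g i) z :=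
  map_sum (AddMonoidHom.mk' (polarization Q · z) (polarization_add_left hQ · · z)) g s

/-- Pythagoras for the parallelogram law: `Q (a + b) = Q (a - b)` is orthogonality. -/
theorem map_sum_of_parallelogram (hQ : ∀ x y, Q (x + y) + Q (x - y) = 2 * Q x + 2 * Q y)
    {ι : Type*} (s : Finset ι) (g : ι → G)
    (horth : ∀ i ∈ s, ∀ j ∈ s, i ≠ j → Q (g i + g j) = Q (g i - g j)) :
    Q (∑ i ∈ s, g i) = ∑ i ∈ s, Q (g i) := by
  have hcross : ∀ i ∈ s, ∀ j ∈ s, i ≠ j → polarization Q (g i) (g j) = 0 := by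
    intro i hi j hj hij
    rw [polarization, horth i hi j hj hij, sub_self, zero_div]
  calc Q (∑ i ∈ s, g i)
      = ∑ i ∈ s, ∑ j ∈ s, polarization Q (g i) (g j) := by
        rw [← polarization_self hQ, polarization_sum_left hQ]
        refine Finset.sum_congr rfl fun i _ => ?_
        rw [polarization_comm hQ, polarization_sum_left hQ]
        exact Finset.sum_congr rfl fun j _ => polarization_comm hQ _ _
    _ = ∑ i ∈ s, polarization Q (g i) (g i) :=
        Finset.sum_congr rfl fun i hi =>
          Finset.sum_eq_single_of_mem i hi fun j hj hji => hcross i hi j hj hji.symm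
    _ = ∑ i ∈ s, Q (g i) := Finset.sum_congr rfl fun i _ => polarization_self hQ _

end Parallelogram

section AbsoluteNorm

variable {ι : Type*} [DecidableEq ι] {Φ : (ι → ℝ) → ℝ}

theorem abs_single_add_single_eq_abs_single_sub_single {i j : ι} (hij : i ≠ j) (a b : ℝ) :
    (fun k => |(Pi.single i a + Pi.single j b : ι → ℝ) k|) =
      fun k => |(Pi.single i a - Pi.single j b : ι → ℝ) k| := by
  funext k
  rcases eq_or_ne k i with rfl | hki
  · simp [hij]
  · rcases eq_or_ne k j with rfl | hkj
    · simp [hki]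
    · simp [hki, hkj]

theorem abs_single_eq_smul_single (i : ι) (t : ℝ) :
    (fun k => |(Pi.single i t : ι → ℝ) k|) = |t| • (Pi.single i 1 : ι → ℝ) := by
  funext k
  rcases eq_or_ne k i with rfl | hki <;> simp [*]

theorem sq_apply_eq_sum_of_nonneg [Fintype ι]
    (hhom : ∀ (l : ℝ) (q : ι → ℝ), 0 ≤ l → (∀ i, 0 ≤ q i) → Φ (l • q) = l * Φ q)
    (hpar : ∀ x y : ι → ℝ,
        Φ (fun i => |(x + y) i|) ^ 2 + Φ (fun i => |(x - y) i|) ^ 2 =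
          2 * Φ (fun i => |x i|) ^ 2 + 2 * Φ (fun i => |y i|) ^ 2)
    (u : ι → ℝ) (hu : ∀ i, 0 ≤ u i) :
    Φ u ^ 2 = ∑ i, Φ (Pi.single i 1) ^ 2 * u i ^ 2 := by
  set Q : (ι → ℝ) → ℝ := fun x => Φ (fun i => |x i|) ^ 2
  have hsingle (i : ι) (t : ℝ) : Q (Pi.single i t) = Φ (Pi.single i 1) ^ 2 * t ^ 2 := by
    have hnonneg : ∀ k, 0 ≤ (Pi.single i 1 : ι → ℝ) k := fun k => by
      rcases eq_or_ne k i with rfl | hki <;> simp [*]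
    simp only [Q, abs_single_eq_smul_single, hhom |t| _ (abs_nonneg t) hnonneg]
    rw [mul_pow, sq_abs, mul_comm]
  have hsum : Q (∑ i, Pi.single i (u i)) = ∑ i, Q (Pi.single i (u i)) :=
    map_sum_of_parallelogram hpar Finset.univ _ fun i _ j _ hij => by
      simp only [Q, abs_single_add_single_eq_abs_single_sub_single hij]
  rw [Finset.univ_sum_single] at hsum
  simpa only [Q, abs_of_nonneg (hu _), hsingle] using hsum

end AbsoluteNorm

theorem stmt16_general (n : ℕ) (Φ : (Fin n → ℝ) → ℝ)
    (hhom : ∀ (l : ℝ) (q : Fin n → ℝ), 0 ≤ l → (∀ i, 0 ≤ q i) → Φ (l • q) = l * Φ q)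
    (hpar : ∀ x y : Fin n → ℝ,
        Φ (fun i => |(x + y) i|) ^ 2 + Φ (fun i => |(x - y) i|) ^ 2 =
          2 * Φ (fun i => |x i|) ^ 2 + 2 * Φ (fun i => |y i|) ^ 2)
    (V : Fin n → Type*) (instG : ∀ i, NormedAddCommGroup (V i))
    (instI : ∀ i, InnerProductSpace ℝ (V i)) :
    (∀ v : ∀ i, V i,
      Φ (fun i => ‖v i‖) ^ 2 = ∑ i, Φ (Pi.single i (1:ℝ)) ^ 2 * ⟪v i, v i⟫) ∧
    (∀ v w : ∀ i, V i,
      (Φ (fun i => ‖v i + w i‖) ^ 2 - Φ (fun i => ‖v i - w i‖) ^ 2) / 4 =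
        ∑ i, Φ (Pi.single i (1:ℝ)) ^ 2 * ⟪v i, w i⟫) := by
  refine ⟨fun v => ?_, fun v w => ?_⟩
  · rw [sq_apply_eq_sum_of_nonneg hhom hpar _ fun i => norm_nonneg (v i)]
    simp only [real_inner_self_eq_norm_sq]
  · rw [sq_apply_eq_sum_of_nonneg hhom hpar _ fun i => norm_nonneg (v i + w i),
      sq_apply_eq_sum_of_nonneg hhom hpar _ fun i => norm_nonneg (v i - w i),
      ← Finset.sum_sub_distrib, Finset.sum_div]
    refine Finset.sum_congr rfl fun i _ => ?_
    rw [norm_add_sq_real, norm_sub_sq_real]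
    ring

/-- if `Ψ(x) = Φ(|x₁|,…,|xₙ|)` is a norm on `ℝⁿ` induced by an inner product
(equivalently, satisfies the parallelogram law), then on a product `V = V₁ × ⋯ × Vₙ` of real
inner product spaces the norm `‖v‖_Φ = Φ(‖v₁‖,…,‖vₙ‖)` is induced by the inner product
`⟨v,w⟩_Φ = ∑ Φ²(eᵢ) ⟨vᵢ,wᵢ⟩ᵢ`. -/
theorem stmt16 (n : ℕ) (Φ : (Fin n → ℝ) → ℝ)
    (hnn : ∀ q : Fin n → ℝ, (∀ i, 0 ≤ q i) → 0 ≤ Φ q)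
    (hdef : ∀ q : Fin n → ℝ, (∀ i, 0 ≤ q i) → (Φ q = 0 ↔ q = 0))
    (hmono : ∀ p q : Fin n → ℝ, (∀ i, 0 ≤ q i) → (∀ i, q i ≤ p i) → Φ q ≤ Φ p)
    (hsub : ∀ p q : Fin n → ℝ, (∀ i, 0 ≤ p i) → (∀ i, 0 ≤ q i) → Φ (p + q) ≤ Φ p + Φ q)
    (hhom : ∀ (l : ℝ) (q : Fin n → ℝ), 0 ≤ l → (∀ i, 0 ≤ q i) → Φ (l • q) = l * Φ q)
    (hpar : ∀ x y : Fin n → ℝ,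
        Φ (fun i => |(x + y) i|) ^ 2 + Φ (fun i => |(x - y) i|) ^ 2 =
          2 * Φ (fun i => |x i|) ^ 2 + 2 * Φ (fun i => |y i|) ^ 2)
    (V : Fin n → Type*) (instG : ∀ i, NormedAddCommGroup (V i))
    (instI : ∀ i, InnerProductSpace ℝ (V i)) :
    (∀ v : ∀ i, V i,
      Φ (fun i => ‖v i‖) ^ 2 = ∑ i, Φ (Pi.single i (1:ℝ)) ^ 2 * ⟪v i, v i⟫) ∧
    (∀ v w : ∀ i, V i,
      (Φ (fun i => ‖v i + w i‖) ^ 2 - Φ (fun i => ‖v i - w i‖) ^ 2) / 4 =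
        ∑ i, Φ (Pi.single i (1:ℝ)) ^ 2 * ⟪v i, w i⟫) :=
  stmt16_general n Φ hhom hpar V instG instI
end

section
/- Let Φ : [0,∞)ⁿ → [0,∞) satisfy conditions (1)–(4) so that Ψ(x) := Φ(|x₁|,…,|xₙ|) is a norm on ℝⁿ with strictly convex unit ball. Let (Xᵢ,dᵢ) be metric spaces, V a real normed vector space, and φ = (φ₁,…,φₙ) : V → (∏Xᵢ, d_Φ) an isometric map. Define αᵢ(a,v) := dᵢ(φᵢ(a),φᵢ(a+v)). Then αᵢ(a,v) = αᵢ(a+v,v) for all a,v ∈ V and all i. -/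
/-- let `Φ` be positive definite, monotone, subadditive and positively
homogeneous, with `Ψ(x) = Φ(|x₁|,…,|xₙ|)` having a strictly convex unit ball. If
`φ : V → (∏ Xᵢ, d_Φ)` is an isometric map from a normed space and
`αᵢ(a,v) = dᵢ(φᵢ a, φᵢ (a+v))`, then `αᵢ(a,v) = αᵢ(a+v,v)` for all `a, v` and all `i`. -/
theorem stmt17 (n : ℕ) (Φ : (Fin n → ℝ) → ℝ)
    (hnn : ∀ q : Fin n → ℝ, (∀ i, 0 ≤ q i) → 0 ≤ Φ q)
    (hdef : ∀ q : Fin n → ℝ, (∀ i, 0 ≤ q i) → (Φ q = 0 ↔ q = 0))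
    (hmono : ∀ p q : Fin n → ℝ, (∀ i, 0 ≤ q i) → (∀ i, q i ≤ p i) → Φ q ≤ Φ p)
    (hsub : ∀ p q : Fin n → ℝ, (∀ i, 0 ≤ p i) → (∀ i, 0 ≤ q i) → Φ (p + q) ≤ Φ p + Φ q)
    (hhom : ∀ (l : ℝ) (q : Fin n → ℝ), 0 ≤ l → (∀ i, 0 ≤ q i) → Φ (l • q) = l * Φ q)
    (hconv : ∀ x y : Fin n → ℝ, x ≠ 0 → y ≠ 0 →
      Φ (fun i => |(x + y) i|) = Φ (fun i => |x i|) + Φ (fun i => |y i|) →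
      ∃ c : ℝ, 0 < c ∧ y = c • x)
    (X : Fin n → Type*) (inst : ∀ i, MetricSpace (X i))
    {V : Type*} [NormedAddCommGroup V] [NormedSpace ℝ V]
    (φ : V → ∀ i, X i)
    (hiso : ∀ a b : V, Φ (fun i => dist (φ a i) (φ b i)) = ‖b - a‖) :
    ∀ (a v : V) (i : Fin n),
      dist (φ a i) (φ (a + v) i) = dist (φ (a + v) i) (φ (a + v + v) i) := by

  intro a v i
  by_cases hv : v = 0
  · subst hv; simp
  have hvn : (0:ℝ) < ‖v‖ := norm_pos_iff.mpr hv
  set p : Fin n → ℝ := fun i => dist (φ a i) (φ (a+v) i) with hp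
  set q : Fin n → ℝ := fun i => dist (φ (a+v) i) (φ (a+v+v) i) with hq
  have hpnn : ∀ i, 0 ≤ p i := fun i => dist_nonneg
  have hqnn : ∀ i, 0 ≤ q i := fun i => dist_nonneg
  have hΦp : Φ p = ‖v‖ := by rw [hp, hiso]; simp
  have hΦq : Φ q = ‖v‖ := by
    rw [hq, hiso]
    congr 1
    abel
  have hΦr : Φ (fun i => dist (φ a i) (φ (a+v+v) i)) = 2*‖v‖ := by
    rw [hiso]
    have h2 : a + v + v - a = (2:ℝ) • v := by
      rw [two_smul]; abel
    rw [h2, norm_smul]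
    norm_num
  have hle : Φ (p+q) ≤ Φ p + Φ q := hsub p q hpnn hqnn
  have hge : 2*‖v‖ ≤ Φ (p+q) := by
    rw [← hΦr]
    exact hmono (p+q) _ (fun i => dist_nonneg)
      (fun i => dist_triangle (φ a i) (φ (a+v) i) (φ (a+v+v) i))
  have heq : Φ (p+q) = Φ p + Φ q := le_antisymm hle (by linarith)
  have hp0 : p ≠ 0 := by
    intro h
    rw [← (hdef p hpnn).mpr h] at hvn
    rw [hΦp] at hvn; exact lt_irrefl _ hvn
  have hq0 : q ≠ 0 := by
    intro h
    rw [← (hdef q hqnn).mpr h] at hvn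
    rw [hΦq] at hvn; exact lt_irrefl _ hvn
  obtain ⟨c, hc, hqc⟩ := hconv p q hp0 hq0 (by
    have e1 : (fun i => |(p + q) i|) = p + q := by
      funext i; exact abs_of_nonneg (add_nonneg (hpnn i) (hqnn i))
    have e2 : (fun i => |p i|) = p := by funext i; exact abs_of_nonneg (hpnn i)
    have e3 : (fun i => |q i|) = q := by funext i; exact abs_of_nonneg (hqnn i)
    rw [e1, e2, e3, heq])
  have hΦcp : Φ q = c * Φ p := by rw [hqc, hhom c p hc.le hpnn]
  rw [hΦp, hΦq] at hΦcp
  have hc1 : c = 1 := by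
    have := hΦcp
    nlinarith
  rw [hc1, one_smul] at hqc
  have := congrFun hqc i
  exact this.symm
end
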